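/- arXiv:math/0504089 — 9 statements merged into one kernel-verified Lean document; each statement's English description precedes it below -/
import Mathlib

section
/- The KZ connection is flat: for the matrices A_i = Σ_k Y_{i,k}/(z_i - α_k) - Σ_{p≠i} ν s_{ip}/(z_i - z_p), one has ∂_i A_j - ∂_j A_i + [A_i, A_j] = 0 for all i ≠ j. -/
open Finset

/-- The `i`-th coefficient matrix of the KZ connection with values in the rational
GDAHA `B_n`:  `A_i = ∑_k Y_{i,k}/(z_i - α_k) - ∑_{p ≠ i} ν s_{ip}/(z_i - z_p)`.
Here the symmetric group acts through a monoid homomorphism `S`, and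
`s_{ip} = S (swap i p)`. -/
noncomputable def kzA {n m : ℕ} {A : Type*} [Ring A] [Algebra ℂ A]
    (ν : ℂ) (z : Fin n → ℂ) (α : Fin m → ℂ)
    (Y : Fin n → Fin m → A) (S : Equiv.Perm (Fin n) →* A) (i : Fin n) : A :=
  (∑ k, (z i - α k)⁻¹ • Y i k)
    - ∑ p ∈ univ.erase i, (ν * (z i - z p)⁻¹) • S (Equiv.swap i p)

/-- Disjoint transpositions commute. -/
lemma kz_swap_disj_comm {n : ℕ} {i p j q : Fin n} (hji : j ≠ i) (hjp : j ≠ p)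
    (hqi : q ≠ i) (hqp : q ≠ p) :
    Equiv.swap i p * Equiv.swap j q = Equiv.swap j q * Equiv.swap i p := by
  rw [Equiv.mul_swap_eq_swap_mul, Equiv.swap_apply_of_ne_of_ne hji hjp,
    Equiv.swap_apply_of_ne_of_ne hqi hqp]

/-- The "swap parts" `Q_i = ∑_{p≠i} ν/(z_i-z_p) • s_{ip}` of two different KZ
matrices commute (Kohno / Arnold relations). -/
lemma kz_QQ_comm {n : ℕ} {A : Type*} [Ring A] [Algebra ℂ A]
    (ν : ℂ) (z : Fin n → ℂ) (hz : Function.Injective z)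
    (S : Equiv.Perm (Fin n) →* A) (i j : Fin n) (hij : i ≠ j) :
    (∑ p ∈ univ.erase i, (ν * (z i - z p)⁻¹) • S (Equiv.swap i p)) *
      (∑ q ∈ univ.erase j, (ν * (z j - z q)⁻¹) • S (Equiv.swap j q))
    = (∑ q ∈ univ.erase j, (ν * (z j - z q)⁻¹) • S (Equiv.swap j q)) *
      (∑ p ∈ univ.erase i, (ν * (z i - z p)⁻¹) • S (Equiv.swap i p)) := by
  classical
  have hji : j ≠ i := hij.symm
  set T : Fin n → Fin n → A := fun p q =>
    ((ν * (z i - z p)⁻¹) * (ν * (z j - z q)⁻¹)) •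
      (S (Equiv.swap i p) * S (Equiv.swap j q)
        - S (Equiv.swap j q) * S (Equiv.swap i p)) with hT
  rw [← sub_eq_zero]
  have e1 : (∑ p ∈ univ.erase i, (ν * (z i - z p)⁻¹) • S (Equiv.swap i p)) *
      (∑ q ∈ univ.erase j, (ν * (z j - z q)⁻¹) • S (Equiv.swap j q))
      = ∑ p ∈ univ.erase i, ∑ q ∈ univ.erase j,
          ((ν * (z i - z p)⁻¹) * (ν * (z j - z q)⁻¹)) •
            (S (Equiv.swap i p) * S (Equiv.swap j q)) := by
    rw [Finset.sum_mul_sum]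
    exact Finset.sum_congr rfl fun p _ => Finset.sum_congr rfl fun q _ =>
      smul_mul_smul_comm _ _ _ _
  have e2 : (∑ q ∈ univ.erase j, (ν * (z j - z q)⁻¹) • S (Equiv.swap j q)) *
      (∑ p ∈ univ.erase i, (ν * (z i - z p)⁻¹) • S (Equiv.swap i p))
      = ∑ p ∈ univ.erase i, ∑ q ∈ univ.erase j,
          ((ν * (z i - z p)⁻¹) * (ν * (z j - z q)⁻¹)) •
            (S (Equiv.swap j q) * S (Equiv.swap i p)) := by
    rw [Finset.sum_mul_sum, Finset.sum_comm]
    exact Finset.sum_congr rfl fun p _ => Finset.sum_congr rfl fun q _ => by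
      rw [smul_mul_smul_comm, mul_comm (ν * (z j - z q)⁻¹) (ν * (z i - z p)⁻¹)]
  rw [e1, e2, ← Finset.sum_sub_distrib]
  have e4 : ∀ p ∈ univ.erase i,
      ((∑ q ∈ univ.erase j, ((ν * (z i - z p)⁻¹) * (ν * (z j - z q)⁻¹)) •
          (S (Equiv.swap i p) * S (Equiv.swap j q)))
        - ∑ q ∈ univ.erase j, ((ν * (z i - z p)⁻¹) * (ν * (z j - z q)⁻¹)) •
            (S (Equiv.swap j q) * S (Equiv.swap i p)))
      = ∑ q ∈ univ.erase j, T p q := fun p _ => by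
    rw [← Finset.sum_sub_distrib]
    exact Finset.sum_congr rfl fun q _ => (smul_sub _ _ _).symm
  rw [Finset.sum_congr rfl e4]
  -- vanishing of "disjoint" terms
  have hT0 : ∀ p q : Fin n, p ≠ i → p ≠ j → q ≠ i → q ≠ j → p ≠ q → T p q = 0 := by
    intro p q hpi hpj hqi hqj hpq
    have hcomm : Equiv.swap i p * Equiv.swap j q = Equiv.swap j q * Equiv.swap i p :=
      kz_swap_disj_comm hji hpj.symm hqi hpq.symm
    simp only [hT, ← map_mul, hcomm, sub_self, smul_zero]
  have hTji : T j i = 0 := by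
    simp only [hT, Equiv.swap_comm j i, sub_self, smul_zero]
  -- the key local (triple) cancellation
  have key : ∀ r : Fin n, r ≠ i → r ≠ j → T j r + (T r i + T r r) = 0 := by
    intro r hri hrj
    have hir : i ≠ r := hri.symm
    have hjr : j ≠ r := hrj.symm
    have g1 : Equiv.swap i r * Equiv.swap j r = Equiv.swap i j * Equiv.swap i r := by
      rw [Equiv.mul_swap_eq_swap_mul, Equiv.swap_apply_of_ne_of_ne hij.symm hjr,
        Equiv.swap_apply_right, Equiv.swap_comm j i]
    have g2 : Equiv.swap j r * Equiv.swap i r = Equiv.swap i j * Equiv.swap j r := by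
      rw [Equiv.mul_swap_eq_swap_mul, Equiv.swap_apply_of_ne_of_ne hij hir,
        Equiv.swap_apply_right]
    have g4 : Equiv.swap j r * Equiv.swap i j = Equiv.swap i j * Equiv.swap i r := by
      rw [Equiv.mul_swap_eq_swap_mul, Equiv.swap_apply_of_ne_of_ne hij hir,
        Equiv.swap_apply_left]
      exact g1
    have g5 : Equiv.swap i r * Equiv.swap i j = Equiv.swap i j * Equiv.swap j r := by
      rw [Equiv.mul_swap_eq_swap_mul, Equiv.swap_apply_left,
        Equiv.swap_apply_of_ne_of_ne hij.symm hjr, Equiv.swap_comm r j]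
      exact g2
    have hzij : z i - z j ≠ 0 := sub_ne_zero.mpr fun h => hij (hz h)
    have hzji : z j - z i ≠ 0 := sub_ne_zero.mpr fun h => hji (hz h)
    have hzir : z i - z r ≠ 0 := sub_ne_zero.mpr fun h => hir (hz h)
    have hzjr : z j - z r ≠ 0 := sub_ne_zero.mpr fun h => hjr (hz h)
    have t1 : T r r = ((ν * (z i - z r)⁻¹) * (ν * (z j - z r)⁻¹)) •
        (S (Equiv.swap i j * Equiv.swap i r) - S (Equiv.swap i j * Equiv.swap j r)) := by
      simp only [hT, ← map_mul, g1, g2]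
    have t2 : T j r = ((ν * (z i - z j)⁻¹) * (ν * (z j - z r)⁻¹)) •
        (S (Equiv.swap i j * Equiv.swap j r) - S (Equiv.swap i j * Equiv.swap i r)) := by
      simp only [hT, ← map_mul, g4]
    have t3 : T r i = ((ν * (z i - z r)⁻¹) * (ν * (z j - z i)⁻¹)) •
        (S (Equiv.swap i j * Equiv.swap j r) - S (Equiv.swap i j * Equiv.swap i r)) := by
      simp only [hT, Equiv.swap_comm j i, ← map_mul, g5]
    have hc : (ν * (z i - z j)⁻¹) * (ν * (z j - z r)⁻¹)
        + (ν * (z i - z r)⁻¹) * (ν * (z j - z i)⁻¹)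
        - (ν * (z i - z r)⁻¹) * (ν * (z j - z r)⁻¹) = 0 := by
      field_simp
      ring
    have comb : T j r + (T r i + T r r)
        = ((ν * (z i - z j)⁻¹) * (ν * (z j - z r)⁻¹)
            + (ν * (z i - z r)⁻¹) * (ν * (z j - z i)⁻¹)
            - (ν * (z i - z r)⁻¹) * (ν * (z j - z r)⁻¹)) •
          (S (Equiv.swap i j * Equiv.swap j r) - S (Equiv.swap i j * Equiv.swap i r)) := by
      rw [t1, t2, t3]
      simp only [smul_sub, add_smul, sub_smul]
      abel
    rw [comb, hc, zero_smul]
  -- assemble the double sum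
  have hj_mem : j ∈ univ.erase i := Finset.mem_erase.mpr ⟨hji, Finset.mem_univ j⟩
  have hi_mem : i ∈ univ.erase j := Finset.mem_erase.mpr ⟨hij, Finset.mem_univ i⟩
  rw [← Finset.add_sum_erase _ _ hj_mem]
  have inner_j : ∑ q ∈ univ.erase j, T j q = ∑ q ∈ (univ.erase j).erase i, T j q := by
    rw [← Finset.add_sum_erase _ _ hi_mem, hTji, zero_add]
  have inner_p : ∀ p ∈ (univ.erase i).erase j,
      ∑ q ∈ univ.erase j, T p q = T p i + T p p := by
    intro p hp
    have hpj : p ≠ j := (Finset.mem_erase.mp hp).1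
    have hpi : p ≠ i := (Finset.mem_erase.mp (Finset.mem_erase.mp hp).2).1
    have hp_mem : p ∈ (univ.erase j).erase i :=
      Finset.mem_erase.mpr ⟨hpi, Finset.mem_erase.mpr ⟨hpj, Finset.mem_univ p⟩⟩
    rw [← Finset.add_sum_erase _ _ hi_mem, ← Finset.add_sum_erase _ _ hp_mem]
    have hrest : ∑ q ∈ ((univ.erase j).erase i).erase p, T p q = 0 := by
      refine Finset.sum_eq_zero fun q hq => ?_
      have hqp : q ≠ p := (Finset.mem_erase.mp hq).1
      have hqi : q ≠ i := (Finset.mem_erase.mp (Finset.mem_erase.mp hq).2).1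
      have hqj : q ≠ j :=
        (Finset.mem_erase.mp (Finset.mem_erase.mp (Finset.mem_erase.mp hq).2).2).1
      exact hT0 p q hpi hpj hqi hqj hqp.symm
    rw [hrest, add_zero]
  rw [inner_j, Finset.sum_congr rfl inner_p, Finset.erase_right_comm,
    ← Finset.sum_add_distrib]
  refine Finset.sum_eq_zero fun r hr => ?_
  have hrj : r ≠ j := (Finset.mem_erase.mp hr).1
  have hri : r ≠ i := (Finset.mem_erase.mp (Finset.mem_erase.mp hr).2).1
  exact key r hri hrj

/-- Two KZ connection matrices commute. -/
lemma kz_mul_comm {n m : ℕ} {A : Type*} [Ring A] [Algebra ℂ A]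
    (ν : ℂ) (z : Fin n → ℂ) (α : Fin m → ℂ)
    (hz : Function.Injective z) (hzα : ∀ i k, z i ≠ α k)
    (Y : Fin n → Fin m → A) (S : Equiv.Perm (Fin n) →* A)
    (h1 : ∀ i j : Fin n, ∀ k, i ≠ j →
      S (Equiv.swap i j) * Y i k = Y j k * S (Equiv.swap i j))
    (h2 : ∀ i j h : Fin n, ∀ k, i ≠ j → h ≠ i → h ≠ j →
      S (Equiv.swap i j) * Y h k = Y h k * S (Equiv.swap i j))
    (h4 : ∀ i j : Fin n, ∀ k, i ≠ j →
      Y i k * Y j k - Y j k * Y i k = ν • ((Y i k - Y j k) * S (Equiv.swap i j)))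
    (h5 : ∀ i j : Fin n, ∀ k l, i ≠ j → k ≠ l → Y i k * Y j l = Y j l * Y i k)
    (i j : Fin n) (hij : i ≠ j) :
    kzA ν z α Y S i * kzA ν z α Y S j = kzA ν z α Y S j * kzA ν z α Y S i := by
  classical
  have hji : j ≠ i := hij.symm
  have hzij : z i - z j ≠ 0 := sub_ne_zero.mpr fun h => hij (hz h)
  have hzji : z j - z i ≠ 0 := sub_ne_zero.mpr fun h => hji (hz h)
  rw [← sub_eq_zero]
  simp only [kzA]
  set Pi := ∑ k, (z i - α k)⁻¹ • Y i k with hPi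
  set Pj := ∑ k, (z j - α k)⁻¹ • Y j k with hPj
  set Qi := ∑ p ∈ univ.erase i, (ν * (z i - z p)⁻¹) • S (Equiv.swap i p) with hQi
  set Qj := ∑ q ∈ univ.erase j, (ν * (z j - z q)⁻¹) • S (Equiv.swap j q) with hQj
  have hi_mem : i ∈ univ.erase j := Finset.mem_erase.mpr ⟨hij, Finset.mem_univ i⟩
  have hj_mem : j ∈ univ.erase i := Finset.mem_erase.mpr ⟨hji, Finset.mem_univ j⟩
  -- [P_i, P_j]
  have hPP : Pi * Pj - Pj * Pi
      = ∑ k, ((z i - α k)⁻¹ * (z j - α k)⁻¹ * ν) •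
          ((Y i k - Y j k) * S (Equiv.swap i j)) := by
    have e1 : Pi * Pj = ∑ k, ∑ l, ((z i - α k)⁻¹ * (z j - α l)⁻¹) • (Y i k * Y j l) := by
      rw [hPi, hPj, Finset.sum_mul_sum]
      exact Finset.sum_congr rfl fun k _ => Finset.sum_congr rfl fun l _ =>
        smul_mul_smul_comm _ _ _ _
    have e2 : Pj * Pi = ∑ k, ∑ l, ((z i - α k)⁻¹ * (z j - α l)⁻¹) • (Y j l * Y i k) := by
      rw [hPi, hPj, Finset.sum_mul_sum, Finset.sum_comm]
      exact Finset.sum_congr rfl fun k _ => Finset.sum_congr rfl fun l _ => by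
        rw [smul_mul_smul_comm, mul_comm ((z j - α l)⁻¹) ((z i - α k)⁻¹)]
    rw [e1, e2, ← Finset.sum_sub_distrib]
    refine Finset.sum_congr rfl fun k _ => ?_
    rw [← Finset.sum_sub_distrib]
    rw [Finset.sum_eq_single k (fun l _ hlk => by
      rw [← smul_sub, h5 i j k l hij (Ne.symm hlk), sub_self, smul_zero])
      (fun hk => absurd (Finset.mem_univ k) hk)]
    rw [← smul_sub, h4 i j k hij, smul_smul]
  -- [P_i, Q_j]
  have hPQ : Pi * Qj - Qj * Pi
      = ∑ k, ((z i - α k)⁻¹ * (ν * (z j - z i)⁻¹)) •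
          ((Y i k - Y j k) * S (Equiv.swap i j)) := by
    have e1 : Pi * Qj = ∑ k, ∑ q ∈ univ.erase j,
        ((z i - α k)⁻¹ * (ν * (z j - z q)⁻¹)) • (Y i k * S (Equiv.swap j q)) := by
      rw [hPi, hQj, Finset.sum_mul_sum]
      exact Finset.sum_congr rfl fun k _ => Finset.sum_congr rfl fun q _ =>
        smul_mul_smul_comm _ _ _ _
    have e2 : Qj * Pi = ∑ k, ∑ q ∈ univ.erase j,
        ((z i - α k)⁻¹ * (ν * (z j - z q)⁻¹)) • (S (Equiv.swap j q) * Y i k) := by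
      rw [hPi, hQj, Finset.sum_mul_sum, Finset.sum_comm]
      exact Finset.sum_congr rfl fun k _ => Finset.sum_congr rfl fun q _ => by
        rw [smul_mul_smul_comm, mul_comm (ν * (z j - z q)⁻¹) ((z i - α k)⁻¹)]
    rw [e1, e2, ← Finset.sum_sub_distrib]
    refine Finset.sum_congr rfl fun k _ => ?_
    rw [← Finset.sum_sub_distrib]
    rw [Finset.sum_eq_single i (fun q hq hqi => by
      have hjq : j ≠ q := ((Finset.mem_erase.mp hq).1).symm
      rw [← smul_sub, h2 j q i k hjq hij hqi.symm, sub_self, smul_zero])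
      (fun hi => absurd hi_mem hi)]
    rw [← smul_sub, Equiv.swap_comm j i, h1 i j k hij, ← sub_mul]
  -- [Q_i, P_j]
  have hQP : Qi * Pj - Pj * Qi
      = ∑ k, ((ν * (z i - z j)⁻¹) * (z j - α k)⁻¹) •
          ((Y i k - Y j k) * S (Equiv.swap i j)) := by
    have e1 : Qi * Pj = ∑ k, ∑ p ∈ univ.erase i,
        ((ν * (z i - z p)⁻¹) * (z j - α k)⁻¹) • (S (Equiv.swap i p) * Y j k) := by
      rw [hPj, hQi, Finset.sum_mul_sum, Finset.sum_comm]
      exact Finset.sum_congr rfl fun k _ => Finset.sum_congr rfl fun p _ =>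
        smul_mul_smul_comm _ _ _ _
    have e2 : Pj * Qi = ∑ k, ∑ p ∈ univ.erase i,
        ((ν * (z i - z p)⁻¹) * (z j - α k)⁻¹) • (Y j k * S (Equiv.swap i p)) := by
      rw [hPj, hQi, Finset.sum_mul_sum]
      exact Finset.sum_congr rfl fun k _ => Finset.sum_congr rfl fun p _ => by
        rw [smul_mul_smul_comm, mul_comm ((z j - α k)⁻¹) (ν * (z i - z p)⁻¹)]
    rw [e1, e2, ← Finset.sum_sub_distrib]
    refine Finset.sum_congr rfl fun k _ => ?_
    rw [← Finset.sum_sub_distrib]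
    rw [Finset.sum_eq_single j (fun p hp hpj => by
      have hip : i ≠ p := ((Finset.mem_erase.mp hp).1).symm
      rw [← smul_sub, h2 i p j k hip hji hpj.symm, sub_self, smul_zero])
      (fun hj => absurd hj_mem hj)]
    have hs : S (Equiv.swap i j) * Y j k = Y i k * S (Equiv.swap i j) := by
      have := h1 j i k hji
      rwa [Equiv.swap_comm j i] at this
    rw [← smul_sub, hs, ← sub_mul]
  -- [Q_i, Q_j]
  have hQQ : Qi * Qj - Qj * Qi = 0 := by
    rw [hQi, hQj, kz_QQ_comm ν z hz S i j hij, sub_self]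
  have expand : Pi * Pj - Pi * Qj - (Qi * Pj - Qi * Qj)
      - (Pj * Pi - Pj * Qi - (Qj * Pi - Qj * Qi))
      = ((Pi * Pj - Pj * Pi) - (Pi * Qj - Qj * Pi)) - (Qi * Pj - Pj * Qi)
        + (Qi * Qj - Qj * Qi) := by
    noncomm_ring
  rw [sub_mul, mul_sub, mul_sub, sub_mul, mul_sub, mul_sub]
  rw [expand, hPP, hPQ, hQP, hQQ, add_zero, ← Finset.sum_sub_distrib,
    ← Finset.sum_sub_distrib]
  refine Finset.sum_eq_zero fun k _ => ?_
  rw [← sub_smul, ← sub_smul]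
  have hzik : z i - α k ≠ 0 := sub_ne_zero.mpr (hzα i k)
  have hzjk : z j - α k ≠ 0 := sub_ne_zero.mpr (hzα j k)
  have hscal : (z i - α k)⁻¹ * (z j - α k)⁻¹ * ν
      - (z i - α k)⁻¹ * (ν * (z j - z i)⁻¹)
      - (ν * (z i - z j)⁻¹) * (z j - α k)⁻¹ = 0 := by
    field_simp
    ring
  rw [hscal, zero_smul]

/-- Flatness of the KZ connection: `∂_i A_j - ∂_j A_i + [A_i, A_j] = 0`, where
`∂_i A_j = -ν s_{ji}/(z_j - z_i)²` and `∂_j A_i = -ν s_{ij}/(z_i - z_j)²`,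
given the defining relations of the rational GDAHA `B_n`. -/
theorem stmt_3 {n m : ℕ} {A : Type*} [Ring A] [Algebra ℂ A]
    (ν : ℂ) (z : Fin n → ℂ) (α : Fin m → ℂ)
    (hz : Function.Injective z) (hα : Function.Injective α)
    (hzα : ∀ i k, z i ≠ α k)
    (Y : Fin n → Fin m → A) (S : Equiv.Perm (Fin n) →* A)
    (h1 : ∀ i j : Fin n, ∀ k, i ≠ j →
      S (Equiv.swap i j) * Y i k = Y j k * S (Equiv.swap i j))
    (h2 : ∀ i j h : Fin n, ∀ k, i ≠ j → h ≠ i → h ≠ j →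
      S (Equiv.swap i j) * Y h k = Y h k * S (Equiv.swap i j))
    (h3 : ∀ i, ∑ k, Y i k = ν • ∑ j ∈ univ.erase i, S (Equiv.swap i j))
    (h4 : ∀ i j : Fin n, ∀ k, i ≠ j →
      Y i k * Y j k - Y j k * Y i k = ν • ((Y i k - Y j k) * S (Equiv.swap i j)))
    (h5 : ∀ i j : Fin n, ∀ k l, i ≠ j → k ≠ l → Y i k * Y j l = Y j l * Y i k)
    (i j : Fin n) (hij : i ≠ j) :
    (-(ν * ((z j - z i)⁻¹) ^ 2)) • S (Equiv.swap j i)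
      - (-(ν * ((z i - z j)⁻¹) ^ 2)) • S (Equiv.swap i j)
      + (kzA ν z α Y S i * kzA ν z α Y S j - kzA ν z α Y S j * kzA ν z α Y S i) = 0 := by
  have hcomm := kz_mul_comm ν z α hz hzα Y S h1 h2 h4 h5 i j hij
  have e1 : ((z j - z i)⁻¹) ^ 2 = ((z i - z j)⁻¹) ^ 2 := by
    rw [show z j - z i = -(z i - z j) by ring, inv_neg, neg_sq]
  rw [Equiv.swap_comm j i, e1, hcomm, sub_self, sub_self, add_zero]
end

section
/- In the KZ connection curvature computation, the commutator [A_i, A_j] (for i ≠ j) equals Σ_k ν(Y_{i,k} - Y_{j,k})s_{ij} [1/((z_i-α_k)(z_j-α_k)) - 1/((z_i-α_k)(z_j-z_i)) - 1/((z_i-z_j)(z_j-α_k))] plus terms involving double commutators of transpositions, and this sum is zero. -/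
open Finset

private lemma sumCommutator {ι κ A : Type*} [Ring A] (s : Finset ι) (t : Finset κ)
    (f : ι → A) (g : κ → A) :
    (∑ x ∈ s, f x) * (∑ y ∈ t, g y) - (∑ y ∈ t, g y) * (∑ x ∈ s, f x)
      = ∑ x ∈ s, ∑ y ∈ t, (f x * g y - g y * f x) := by
  rw [Finset.sum_mul_sum, Finset.sum_mul_sum, Finset.sum_comm (s := t)]
  rw [← Finset.sum_sub_distrib]
  exact Finset.sum_congr rfl fun x _ => by rw [← Finset.sum_sub_distrib]

private lemma smulComm {A : Type*} [Ring A] [Algebra ℂ A] (c d : ℂ) (a b : A) :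
    (c • a) * (d • b) - (d • b) * (c • a) = (c * d) • (a * b - b * a) := by
  rw [smul_mul_smul_comm, smul_mul_smul_comm, mul_comm d c, ← smul_sub]

private lemma swapMul {β : Type*} [DecidableEq β] {i j q : β}
    (hij : i ≠ j) (hiq : i ≠ q) (hjq : j ≠ q) :
    Equiv.swap i j * Equiv.swap j q = Equiv.swap i q * Equiv.swap i j := by
  ext x
  simp only [Equiv.Perm.mul_apply, Equiv.swap_apply_def]
  split_ifs <;> simp_all

private lemma swapDisj {β : Type*} [DecidableEq β] {i p j q : β}
    (h1 : i ≠ j) (h2 : i ≠ q) (h3 : p ≠ j) (h4 : p ≠ q) :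
    Equiv.swap i p * Equiv.swap j q = Equiv.swap j q * Equiv.swap i p := by
  ext x
  simp only [Equiv.Perm.mul_apply, Equiv.swap_apply_def]
  split_ifs <;> simp_all

section Main

variable {n m : ℕ} {A : Type*} [Ring A] [Algebra ℂ A]
    (ν : ℂ) (z : Fin n → ℂ) (α : Fin m → ℂ)

private lemma keyEq
    (Y : Fin n → Fin m → A) (S : Equiv.Perm (Fin n) →* A)
    (h1 : ∀ i j : Fin n, ∀ k, i ≠ j →
      S (Equiv.swap i j) * Y i k = Y j k * S (Equiv.swap i j))
    (h2 : ∀ i j h : Fin n, ∀ k, i ≠ j → h ≠ i → h ≠ j →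
      S (Equiv.swap i j) * Y h k = Y h k * S (Equiv.swap i j))
    (h4 : ∀ i j : Fin n, ∀ k, i ≠ j →
      Y i k * Y j k - Y j k * Y i k = ν • ((Y i k - Y j k) * S (Equiv.swap i j)))
    (h5 : ∀ i j : Fin n, ∀ k l, i ≠ j → k ≠ l → Y i k * Y j l = Y j l * Y i k)
    (i j : Fin n) (hij : i ≠ j) :
    kzA ν z α Y S i * kzA ν z α Y S j - kzA ν z α Y S j * kzA ν z α Y S i =
      (∑ k, (ν * ((z i - α k)⁻¹ * (z j - α k)⁻¹
            - (z i - α k)⁻¹ * (z j - z i)⁻¹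
            - (z i - z j)⁻¹ * (z j - α k)⁻¹)) •
          ((Y i k - Y j k) * S (Equiv.swap i j)))
      + (∑ q ∈ univ \ {i, j}, ((z i - z j)⁻¹ * (z j - z q)⁻¹) •
          ((ν • S (Equiv.swap i j)) * (ν • S (Equiv.swap j q))
            - (ν • S (Equiv.swap j q)) * (ν • S (Equiv.swap i j))))
      + (∑ p ∈ univ \ {i, j}, ((z i - z p)⁻¹ * (z j - z i)⁻¹) •
          ((ν • S (Equiv.swap i p)) * (ν • S (Equiv.swap i j))
            - (ν • S (Equiv.swap i j)) * (ν • S (Equiv.swap i p))))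
      + (∑ p ∈ univ \ {i, j}, ((z i - z p)⁻¹ * (z j - z p)⁻¹) •
          ((ν • S (Equiv.swap i p)) * (ν • S (Equiv.swap j p))
            - (ν • S (Equiv.swap j p)) * (ν • S (Equiv.swap i p)))) := by
  classical
  set D : Finset (Fin n) := univ \ {i, j} with hD
  set Bi : A := ∑ k, (z i - α k)⁻¹ • Y i k with hBi
  set Bj : A := ∑ k, (z j - α k)⁻¹ • Y j k with hBj
  set Ci : A := ∑ p ∈ univ.erase i, (ν * (z i - z p)⁻¹) • S (Equiv.swap i p) with hCi
  set Cj : A := ∑ p ∈ univ.erase j, (ν * (z j - z p)⁻¹) • S (Equiv.swap j p) with hCj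
  have expand : kzA ν z α Y S i * kzA ν z α Y S j - kzA ν z α Y S j * kzA ν z α Y S i
      = (Bi * Bj - Bj * Bi) - (Bi * Cj - Cj * Bi) - (Ci * Bj - Bj * Ci)
        + (Ci * Cj - Cj * Ci) := by
    show (Bi - Ci) * (Bj - Cj) - (Bj - Cj) * (Bi - Ci) = _
    noncomm_ring
  have hjD : j ∉ D := by simp [hD]
  have hiD : i ∉ D := by simp [hD]
  have hDmem : ∀ q ∈ D, q ≠ i ∧ q ≠ j := by
    intro q hq
    rw [hD] at hq
    simp only [mem_sdiff, mem_univ, mem_insert, mem_singleton, true_and] at hq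
    exact ⟨fun h => hq (Or.inl h), fun h => hq (Or.inr h)⟩
  have hDe_i : (univ : Finset (Fin n)).erase i = insert j D := by
    ext x
    simp only [mem_erase, mem_univ, and_true, mem_insert, hD, mem_sdiff, mem_singleton,
      true_and]
    constructor
    · intro h
      by_cases hx : x = j
      · exact Or.inl hx
      · exact Or.inr (by tauto)
    · rintro (rfl | h)
      · exact Ne.symm hij
      · tauto
  have hDe_j : (univ : Finset (Fin n)).erase j = insert i D := by
    ext x
    simp only [mem_erase, mem_univ, and_true, mem_insert, hD, mem_sdiff, mem_singleton,
      true_and]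
    constructor
    · intro h
      by_cases hx : x = i
      · exact Or.inl hx
      · exact Or.inr (by tauto)
    · rintro (rfl | h)
      · exact hij
      · tauto
  have e1 : Bi * Bj - Bj * Bi
      = ∑ k, (((z i - α k)⁻¹ * (z j - α k)⁻¹) * ν) •
          ((Y i k - Y j k) * S (Equiv.swap i j)) := by
    rw [hBi, hBj, sumCommutator]
    refine Finset.sum_congr rfl fun k _ => ?_
    rw [Finset.sum_eq_single_of_mem k (Finset.mem_univ k) (fun l _ hlk => ?_)]
    · rw [smulComm, h4 i j k hij, smul_smul]
    · rw [smulComm, h5 i j k l hij (Ne.symm hlk), sub_self, smul_zero]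
  have e2 : Bi * Cj - Cj * Bi
      = ∑ k, ((z i - α k)⁻¹ * (ν * (z j - z i)⁻¹)) •
          ((Y i k - Y j k) * S (Equiv.swap i j)) := by
    rw [hBi, hCj, sumCommutator]
    refine Finset.sum_congr rfl fun k _ => ?_
    rw [Finset.sum_eq_single_of_mem i (by simp [hij]) (fun q hq hqi => ?_)]
    · rw [Equiv.swap_comm j i, smulComm, h1 i j k hij]
      rw [show Y i k * S (Equiv.swap i j) - Y j k * S (Equiv.swap i j)
          = (Y i k - Y j k) * S (Equiv.swap i j) from (sub_mul _ _ _).symm]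
    · have hqj : q ≠ j := (Finset.mem_erase.mp hq).1
      rw [smulComm, ← h2 j q i k (Ne.symm hqj) hij (Ne.symm hqi), sub_self, smul_zero]
  have e3 : Ci * Bj - Bj * Ci
      = ∑ l, ((ν * (z i - z j)⁻¹) * (z j - α l)⁻¹) •
          ((Y i l - Y j l) * S (Equiv.swap i j)) := by
    rw [hCi, hBj, sumCommutator]
    rw [Finset.sum_eq_single_of_mem j (by simp [Ne.symm hij]) (fun p hp hpj => ?_)]
    · refine Finset.sum_congr rfl fun l _ => ?_
      rw [smulComm]
      have h := h1 j i l (Ne.symm hij)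
      rw [Equiv.swap_comm j i] at h
      rw [h, show Y i l * S (Equiv.swap i j) - Y j l * S (Equiv.swap i j)
          = (Y i l - Y j l) * S (Equiv.swap i j) from (sub_mul _ _ _).symm]
    · have hpi : p ≠ i := (Finset.mem_erase.mp hp).1
      refine Finset.sum_eq_zero fun l _ => ?_
      rw [smulComm, h2 i p j l (Ne.symm hpi) (Ne.symm hij) (Ne.symm hpj), sub_self,
        smul_zero]
  have e4 : Ci * Cj - Cj * Ci
      = (∑ q ∈ D, ((z i - z j)⁻¹ * (z j - z q)⁻¹) •
          ((ν • S (Equiv.swap i j)) * (ν • S (Equiv.swap j q))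
            - (ν • S (Equiv.swap j q)) * (ν • S (Equiv.swap i j))))
      + (∑ p ∈ D, ((((z i - z p)⁻¹ * (z j - z i)⁻¹) •
          ((ν • S (Equiv.swap i p)) * (ν • S (Equiv.swap i j))
            - (ν • S (Equiv.swap i j)) * (ν • S (Equiv.swap i p))))
        + ((z i - z p)⁻¹ * (z j - z p)⁻¹) •
          ((ν • S (Equiv.swap i p)) * (ν • S (Equiv.swap j p))
            - (ν • S (Equiv.swap j p)) * (ν • S (Equiv.swap i p))))) := by
    rw [hCi, hCj, sumCommutator, hDe_i, hDe_j, Finset.sum_insert hjD]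
    simp only [Finset.sum_insert hiD]
    have gji : (ν * (z i - z j)⁻¹) • S (Equiv.swap i j) *
          ((ν * (z j - z i)⁻¹) • S (Equiv.swap j i))
        - (ν * (z j - z i)⁻¹) • S (Equiv.swap j i) *
          ((ν * (z i - z j)⁻¹) • S (Equiv.swap i j)) = 0 := by
      rw [Equiv.swap_comm j i, smulComm, sub_self, smul_zero]
    rw [gji, zero_add]
    congr 1
    · refine Finset.sum_congr rfl fun q hq => ?_
      rw [smulComm, smulComm, smul_smul]
      congr 1
      ring
    · refine Finset.sum_congr rfl fun p hp => ?_
      obtain ⟨hpi, hpj⟩ := hDmem p hp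
      congr 1
      · rw [Equiv.swap_comm j i, smulComm, smulComm, smul_smul]
        congr 1
        ring
      · rw [Finset.sum_eq_single_of_mem p hp (fun q hq hqp => ?_)]
        · rw [smulComm, smulComm, smul_smul]
          congr 1
          ring
        · obtain ⟨hqi, hqj⟩ := hDmem q hq
          have hcomm := congrArg S (swapDisj hij (Ne.symm hqi) hpj (Ne.symm hqp))
          rw [map_mul, map_mul] at hcomm
          rw [smulComm, hcomm, sub_self, smul_zero]
  rw [expand, e1, e2, e3, e4]
  have efirst : (∑ k, (((z i - α k)⁻¹ * (z j - α k)⁻¹) * ν) •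
          ((Y i k - Y j k) * S (Equiv.swap i j)))
      - (∑ k, ((z i - α k)⁻¹ * (ν * (z j - z i)⁻¹)) •
          ((Y i k - Y j k) * S (Equiv.swap i j)))
      - (∑ k, ((ν * (z i - z j)⁻¹) * (z j - α k)⁻¹) •
          ((Y i k - Y j k) * S (Equiv.swap i j)))
      = ∑ k, (ν * ((z i - α k)⁻¹ * (z j - α k)⁻¹
            - (z i - α k)⁻¹ * (z j - z i)⁻¹
            - (z i - z j)⁻¹ * (z j - α k)⁻¹)) •
          ((Y i k - Y j k) * S (Equiv.swap i j)) := by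
    rw [← Finset.sum_sub_distrib, ← Finset.sum_sub_distrib]
    refine Finset.sum_congr rfl fun k _ => ?_
    rw [← sub_smul, ← sub_smul]
    congr 1
    ring
  rw [efirst, Finset.sum_add_distrib]
  abel

private lemma rhsZero
    (hz : Function.Injective z) (hzα : ∀ i k, z i ≠ α k)
    (Y : Fin n → Fin m → A) (S : Equiv.Perm (Fin n) →* A)
    (i j : Fin n) (hij : i ≠ j) :
    (∑ k, (ν * ((z i - α k)⁻¹ * (z j - α k)⁻¹
            - (z i - α k)⁻¹ * (z j - z i)⁻¹
            - (z i - z j)⁻¹ * (z j - α k)⁻¹)) •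
          ((Y i k - Y j k) * S (Equiv.swap i j)))
      + (∑ q ∈ univ \ {i, j}, ((z i - z j)⁻¹ * (z j - z q)⁻¹) •
          ((ν • S (Equiv.swap i j)) * (ν • S (Equiv.swap j q))
            - (ν • S (Equiv.swap j q)) * (ν • S (Equiv.swap i j))))
      + (∑ p ∈ univ \ {i, j}, ((z i - z p)⁻¹ * (z j - z i)⁻¹) •
          ((ν • S (Equiv.swap i p)) * (ν • S (Equiv.swap i j))
            - (ν • S (Equiv.swap i j)) * (ν • S (Equiv.swap i p))))
      + (∑ p ∈ univ \ {i, j}, ((z i - z p)⁻¹ * (z j - z p)⁻¹) •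
          ((ν • S (Equiv.swap i p)) * (ν • S (Equiv.swap j p))
            - (ν • S (Equiv.swap j p)) * (ν • S (Equiv.swap i p)))) = 0 := by
  classical
  have hzij : z i - z j ≠ 0 := sub_ne_zero.mpr fun h => hij (hz h)
  have hzji : z j - z i ≠ 0 := sub_ne_zero.mpr fun h => hij (hz h).symm
  have first : (∑ k, (ν * ((z i - α k)⁻¹ * (z j - α k)⁻¹
            - (z i - α k)⁻¹ * (z j - z i)⁻¹
            - (z i - z j)⁻¹ * (z j - α k)⁻¹)) •
          ((Y i k - Y j k) * S (Equiv.swap i j))) = 0 := by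
    refine Finset.sum_eq_zero fun k _ => ?_
    have ha : z i - α k ≠ 0 := sub_ne_zero.mpr (hzα i k)
    have hb : z j - α k ≠ 0 := sub_ne_zero.mpr (hzα j k)
    rw [show ν * ((z i - α k)⁻¹ * (z j - α k)⁻¹
            - (z i - α k)⁻¹ * (z j - z i)⁻¹
            - (z i - z j)⁻¹ * (z j - α k)⁻¹) = 0 by field_simp; ring, zero_smul]
  rw [first, zero_add, add_assoc, ← Finset.sum_add_distrib, ← Finset.sum_add_distrib]
  refine Finset.sum_eq_zero fun q hq => ?_
  have hq' : q ≠ i ∧ q ≠ j := by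
    simp only [mem_sdiff, mem_univ, mem_insert, mem_singleton, true_and] at hq
    exact ⟨fun h => hq (Or.inl h), fun h => hq (Or.inr h)⟩
  obtain ⟨hqi, hqj⟩ := hq'
  have ha : z i - z q ≠ 0 := sub_ne_zero.mpr fun h => hqi (hz h).symm
  have hb : z j - z q ≠ 0 := sub_ne_zero.mpr fun h => hqj (hz h).symm
  -- swap product identities
  have q1 : Equiv.swap i q * Equiv.swap i j = Equiv.swap i j * Equiv.swap j q :=
    (swapMul hij (Ne.symm hqi) (Ne.symm hqj)).symm
  have q2 : Equiv.swap i j * Equiv.swap i q = Equiv.swap j q * Equiv.swap i j := by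
    have h := swapMul (Ne.symm hij) (Ne.symm hqj) (Ne.symm hqi)
    rwa [Equiv.swap_comm j i] at h
  have q3 : Equiv.swap i q * Equiv.swap j q = Equiv.swap j q * Equiv.swap i j := by
    have h := swapMul (Ne.symm hqi) hij hqj
    rw [Equiv.swap_comm q j] at h
    exact h.trans q2
  have q4 : Equiv.swap j q * Equiv.swap i q = Equiv.swap i j * Equiv.swap j q := by
    have h := swapMul (Ne.symm hqj) (Ne.symm hij) hqi
    rwa [Equiv.swap_comm q i, Equiv.swap_comm j i] at h
  have P1 := congrArg S q1; rw [map_mul, map_mul] at P1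
  have P2 := congrArg S q2; rw [map_mul, map_mul] at P2
  have P3 := congrArg S q3; rw [map_mul, map_mul] at P3
  have P4 := congrArg S q4; rw [map_mul, map_mul] at P4
  rw [smulComm, smulComm, smulComm, P1, P2, P3, P4]
  rw [show S (Equiv.swap j q) * S (Equiv.swap i j) - S (Equiv.swap i j) * S (Equiv.swap j q)
      = -(S (Equiv.swap i j) * S (Equiv.swap j q) - S (Equiv.swap j q) * S (Equiv.swap i j))
    from (neg_sub _ _).symm]
  rw [smul_neg, smul_neg, smul_smul, smul_smul, smul_smul, ← sub_eq_add_neg, ← sub_smul,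
    ← add_smul]
  rw [show (z i - z j)⁻¹ * (z j - z q)⁻¹ * (ν * ν) + ((z i - z q)⁻¹ * (z j - z i)⁻¹ * (ν * ν)
      - (z i - z q)⁻¹ * (z j - z q)⁻¹ * (ν * ν)) = 0 by field_simp; ring, zero_smul]

end Main

/-- In the KZ curvature computation, for `i ≠ j` the commutator `[A_i, A_j]` equals
`∑_k ν (Y_{i,k} - Y_{j,k}) s_{ij} ⬝ [1/((z_i-α_k)(z_j-α_k)) - 1/((z_i-α_k)(z_j-z_i))
- 1/((z_i-z_j)(z_j-α_k))]` plus the three sums of double commutators of (scaled)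
transpositions, and this sum is zero. -/
theorem stmt_4 {n m : ℕ} {A : Type*} [Ring A] [Algebra ℂ A]
    (ν : ℂ) (z : Fin n → ℂ) (α : Fin m → ℂ)
    (hz : Function.Injective z) (hα : Function.Injective α)
    (hzα : ∀ i k, z i ≠ α k)
    (Y : Fin n → Fin m → A) (S : Equiv.Perm (Fin n) →* A)
    (h1 : ∀ i j : Fin n, ∀ k, i ≠ j →
      S (Equiv.swap i j) * Y i k = Y j k * S (Equiv.swap i j))
    (h2 : ∀ i j h : Fin n, ∀ k, i ≠ j → h ≠ i → h ≠ j →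
      S (Equiv.swap i j) * Y h k = Y h k * S (Equiv.swap i j))
    (h3 : ∀ i, ∑ k, Y i k = ν • ∑ j ∈ univ.erase i, S (Equiv.swap i j))
    (h4 : ∀ i j : Fin n, ∀ k, i ≠ j →
      Y i k * Y j k - Y j k * Y i k = ν • ((Y i k - Y j k) * S (Equiv.swap i j)))
    (h5 : ∀ i j : Fin n, ∀ k l, i ≠ j → k ≠ l → Y i k * Y j l = Y j l * Y i k)
    (i j : Fin n) (hij : i ≠ j) :
    (kzA ν z α Y S i * kzA ν z α Y S j - kzA ν z α Y S j * kzA ν z α Y S i =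
      (∑ k, (ν * ((z i - α k)⁻¹ * (z j - α k)⁻¹
            - (z i - α k)⁻¹ * (z j - z i)⁻¹
            - (z i - z j)⁻¹ * (z j - α k)⁻¹)) •
          ((Y i k - Y j k) * S (Equiv.swap i j)))
      + (∑ q ∈ univ \ {i, j}, ((z i - z j)⁻¹ * (z j - z q)⁻¹) •
          ((ν • S (Equiv.swap i j)) * (ν • S (Equiv.swap j q))
            - (ν • S (Equiv.swap j q)) * (ν • S (Equiv.swap i j))))
      + (∑ p ∈ univ \ {i, j}, ((z i - z p)⁻¹ * (z j - z i)⁻¹) •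
          ((ν • S (Equiv.swap i p)) * (ν • S (Equiv.swap i j))
            - (ν • S (Equiv.swap i j)) * (ν • S (Equiv.swap i p))))
      + (∑ p ∈ univ \ {i, j}, ((z i - z p)⁻¹ * (z j - z p)⁻¹) •
          ((ν • S (Equiv.swap i p)) * (ν • S (Equiv.swap j p))
            - (ν • S (Equiv.swap j p)) * (ν • S (Equiv.swap i p)))))
    ∧ kzA ν z α Y S i * kzA ν z α Y S j - kzA ν z α Y S j * kzA ν z α Y S i = 0 := by
  have key := keyEq ν z α Y S h1 h2 h4 h5 i j hij
  have zero := rhsZero ν z α hz hzα Y S i j hij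
  exact ⟨key, key.trans zero⟩
end

section
/- (Crawley-Boevey linear algebra lemma, part (i), base case chain): Suppose V_0, V_1 are finite-dimensional complex vector spaces with dim V_0 < dim V_1, a: V_0 → V_1 and b: V_1 → V_0 are linear maps such that b∘a ∈ 𝒪 for a conjugacy class 𝒪 in End(V_0) none of whose elements have 0 as an eigenvalue. Then a∘b is conjugate (in End(V_1)) to the direct sum of an element of 𝒪 and the zero matrix of size dim V_1 - dim V_0. -/
open Matrix Module

/-- Crawley-Boevey linear algebra lemma, part (i), base case: if `D₀ < D₁`,
`a : ℂ^{D₀} → ℂ^{D₁}`, `b : ℂ^{D₁} → ℂ^{D₀}` with `b*a` lying in a conjugacy class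
`𝒪` none of whose elements has `0` as an eigenvalue (i.e. all elements are invertible),
then `a*b` is conjugate to the direct sum of an element `C₀ ∈ 𝒪` and the zero matrix
of size `D₁ - D₀`. -/
theorem stmt_5 (D₀ D₁ : ℕ) (hD : D₀ < D₁)
    (a : Matrix (Fin D₁) (Fin D₀) ℂ) (b : Matrix (Fin D₀) (Fin D₁) ℂ)
    (𝒪 : Set (Matrix (Fin D₀) (Fin D₀) ℂ))
    (h𝒪 : ∀ X, X ∈ 𝒪 ↔ ∃ g : GL (Fin D₀) ℂ,
      X = (g : Matrix (Fin D₀) (Fin D₀) ℂ) * (b * a) * ((g⁻¹ : GL (Fin D₀) ℂ) : Matrix (Fin D₀) (Fin D₀) ℂ))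
    (hinv : ∀ X ∈ 𝒪, IsUnit X) :
    ∃ C₀ ∈ 𝒪, ∃ g : GL (Fin D₁) ℂ,
      a * b = (g : Matrix (Fin D₁) (Fin D₁) ℂ) *
        (Matrix.reindex (finSumFinEquiv.trans (finCongr (by omega : D₀ + (D₁ - D₀) = D₁)))
          (finSumFinEquiv.trans (finCongr (by omega : D₀ + (D₁ - D₀) = D₁)))
          (Matrix.fromBlocks C₀ 0 0 0)) *
        ((g⁻¹ : GL (Fin D₁) ℂ) : Matrix (Fin D₁) (Fin D₁) ℂ) := by
  have hba : (b * a) ∈ 𝒪 := (h𝒪 _).2 ⟨1, by simp⟩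
  have hbaU : IsUnit (b * a) := hinv _ hba
  have hinj : Function.Injective ((b * a).mulVec) :=
    mulVec_injective_iff_isUnit.2 hbaU
  set d := D₁ - D₀ with hdd
  set B := Matrix.mulVecLin b with hBdef
  obtain ⟨u, hu⟩ := hbaU
  have hsurj : Function.Surjective B := by
    intro y
    refine ⟨a.mulVec ((↑u⁻¹ : Matrix (Fin D₀) (Fin D₀) ℂ).mulVec y), ?_⟩
    have h1 : ((u : Matrix (Fin D₀) (Fin D₀) ℂ) * ((u⁻¹ : (Matrix (Fin D₀) (Fin D₀) ℂ)ˣ) : Matrix (Fin D₀) (Fin D₀) ℂ)) = 1 := u.mul_inv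
    simp only [hBdef, Matrix.mulVecLin_apply, Matrix.mulVec_mulVec, ← Matrix.mul_assoc, ← hu, h1]
    simp
  have hker : finrank ℂ (LinearMap.ker B) = d := by
    have h1 := LinearMap.finrank_range_add_finrank_ker B
    have h2 : finrank ℂ (LinearMap.range B) = D₀ := by
      rw [LinearMap.range_eq_top.2 hsurj, finrank_top]
      simp
    rw [h2] at h1
    simp only [Module.finrank_pi, Fintype.card_fin] at h1
    omega
  let κ : Basis (Fin d) ℂ (LinearMap.ker B) := Module.finBasisOfFinrankEq ℂ _ hker
  let K : Matrix (Fin D₁) (Fin d) ℂ := Matrix.of fun i j => ((κ j : Fin D₁ → ℂ) i)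
  have hbK : b * K = 0 := by
    ext i j
    have h0 : b.mulVec (κ j : Fin D₁ → ℂ) = 0 := (κ j).2
    have := congrFun h0 i
    simpa [Matrix.mul_apply, Matrix.mulVec, dotProduct, K] using this
  set e : (Fin D₀ ⊕ Fin d) ≃ Fin D₁ :=
    finSumFinEquiv.trans (finCongr (by omega : D₀ + d = D₁)) with he
  set G : Matrix (Fin D₁) (Fin D₀ ⊕ Fin d) ℂ := Matrix.fromCols a K with hG
  have hGeq : (a * b) * G = G * Matrix.fromBlocks (b * a) 0 0 0 := by
    rw [hG, Matrix.mul_fromCols]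
    erw [Matrix.fromCols_mul_fromBlocks]
    rw [Matrix.mul_assoc a b K, hbK]
    simp [Matrix.mul_assoc]
  set gm : Matrix (Fin D₁) (Fin D₁) ℂ := G.submatrix id e.symm with hgm
  have hgmInj : Function.Injective gm.mulVec := by
    suffices h : ∀ z : Fin D₁ → ℂ, gm.mulVec z = 0 → z = 0 by
      intro x y hxy
      have hsub : gm.mulVec (x - y) = 0 := by
        rw [Matrix.mulVec_sub, hxy, sub_self]
      exact sub_eq_zero.mp (h _ hsub)
    intro z hz
    have hz' : G.mulVec (Sum.elim (fun i => z (e (Sum.inl i))) (fun j => z (e (Sum.inr j)))) = 0 := by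
      have hze : G.mulVec (z ∘ e) = 0 := by
        funext i
        have := congrFun hz i
        simpa [hgm, Matrix.mulVec, dotProduct,
          Fintype.sum_equiv e.symm.symm (fun k => G i k * z (e k))
            (fun k => G i (e.symm k) * z k) (fun k => by simp)] using this
      convert hze using 2
      funext k
      cases k <;> rfl
    rw [hG, Matrix.fromCols_mulVec_sumElim] at hz'
    set z₁ : Fin D₀ → ℂ := fun i => z (e (Sum.inl i)) with hz₁
    set z₂ : Fin d → ℂ := fun j => z (e (Sum.inr j)) with hz₂
    have hz1 : z₁ = 0 := by
      have hb0 := congrArg b.mulVec hz'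
      rw [Matrix.mulVec_add, Matrix.mulVec_mulVec, Matrix.mulVec_mulVec, hbK] at hb0
      simp only [Matrix.zero_mulVec, add_zero, Matrix.mulVec_zero] at hb0
      have : (b * a).mulVec z₁ = (b * a).mulVec 0 := by simpa using hb0
      exact hinj this
    have hz2 : z₂ = 0 := by
      rw [hz1] at hz'
      simp only [Matrix.mulVec_zero, zero_add] at hz'
      have hsum : (∑ j, z₂ j • κ j) = 0 := by
        apply Subtype.ext
        have hc : (↑(∑ j, z₂ j • κ j) : Fin D₁ → ℂ) = K.mulVec z₂ := by
          push_cast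
          funext i
          simp [Matrix.mulVec, dotProduct, K, mul_comm]
        rw [hc, hz']
        rfl
      have := linearIndependent_iff'.1 κ.linearIndependent Finset.univ z₂ hsum
      funext j
      exact this j (Finset.mem_univ j)
    funext i
    obtain ⟨k, rfl⟩ := e.surjective i
    cases k with
    | inl i => exact congrFun hz1 i
    | inr j => exact congrFun hz2 j
  have hgmU : IsUnit gm := mulVec_injective_iff_isUnit.1 hgmInj
  have hcoe : (hgmU.unit : Matrix (Fin D₁) (Fin D₁) ℂ) = gm := hgmU.unit_spec
  have key : (a * b) * gm =
      gm * ((Matrix.fromBlocks (b * a) 0 0 0).submatrix e.symm e.symm) := by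
    calc (a * b) * gm
        = ((a * b).submatrix id (Equiv.refl (Fin D₁))) * (G.submatrix (Equiv.refl (Fin D₁)) e.symm) := by
          simp [hgm]
      _ = ((a * b) * G).submatrix id e.symm :=
          Matrix.submatrix_mul_equiv (a * b) G id (Equiv.refl (Fin D₁)) e.symm
      _ = (G * Matrix.fromBlocks (b * a) 0 0 0).submatrix id e.symm := by rw [hGeq]; rfl
      _ = (G.submatrix id e.symm) * ((Matrix.fromBlocks (b * a) 0 0 0).submatrix e.symm e.symm) :=
          (Matrix.submatrix_mul_equiv G _ id e.symm e.symm).symm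
      _ = gm * _ := by rw [hgm]
  refine ⟨b * a, hba, hgmU.unit, ?_⟩
  have final : a * b = (hgmU.unit : Matrix (Fin D₁) (Fin D₁) ℂ) *
      (Matrix.reindex e e (Matrix.fromBlocks (b * a) 0 0 0)) *
      ((hgmU.unit⁻¹ : (Matrix (Fin D₁) (Fin D₁) ℂ)ˣ) : Matrix (Fin D₁) (Fin D₁) ℂ) := by
    rw [Matrix.reindex_apply, hcoe, ← key, Matrix.mul_assoc (a * b) gm,
      hgmU.mul_val_inv, Matrix.mul_one]
  exact final
end

section
/- (Crawley-Boevey lemma, uniqueness part of base step): If C ∈ End(W) and C' ∈ End(V) with C' invertible, and Im(C) has dimension dim V, then any two pairs (a, b) with a: V → W, b: W → V, ab = C, ba = C' are conjugate by an element of GL(V) × GL(W) that centralizes C on W; moreover such a pair exists if and only if C restricted to its image is conjugate to C' (under an isomorphism Im(C) ≅ V). -/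
open LinearMap Submodule Module

/-- Crawley-Boevey lemma, uniqueness part of the base step: let `C ∈ End(W)`,
`C' ∈ End(V)` invertible, with `dim (Im C) = dim V`. Then (1) any two pairs `(a,b)`,
`(a',b')` of linear maps `a : V → W`, `b : W → V` with `a∘b = C`, `b∘a = C'` are
conjugate by an element `(gV, gW)` of `GL(V) × GL(W)` with `gW` centralizing `C`;
and (2) such a pair exists iff `C` restricted to its image is conjugate to `C'`
(under an isomorphism `Im C ≅ V`). -/
theorem stmt_7 (V W : Type*) [AddCommGroup V] [Module ℂ V] [FiniteDimensional ℂ V]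
    [AddCommGroup W] [Module ℂ W] [FiniteDimensional ℂ W]
    (C : W →ₗ[ℂ] W) (C' : V →ₗ[ℂ] V) (hC' : Function.Bijective C')
    (hdim : Module.finrank ℂ (LinearMap.range C) = Module.finrank ℂ V) :
    (∀ (a a' : V →ₗ[ℂ] W) (b b' : W →ₗ[ℂ] V),
      a ∘ₗ b = C → b ∘ₗ a = C' → a' ∘ₗ b' = C → b' ∘ₗ a' = C' →
      ∃ (gV : V ≃ₗ[ℂ] V) (gW : W ≃ₗ[ℂ] W),
        (gW.toLinearMap ∘ₗ C = C ∘ₗ gW.toLinearMap) ∧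
        a' = gW.toLinearMap ∘ₗ a ∘ₗ gV.symm.toLinearMap ∧
        b' = gV.toLinearMap ∘ₗ b ∘ₗ gW.symm.toLinearMap)
    ∧ ((∃ (a : V →ₗ[ℂ] W) (b : W →ₗ[ℂ] V), a ∘ₗ b = C ∧ b ∘ₗ a = C')
        ↔ ∃ φ : LinearMap.range C ≃ₗ[ℂ] V,
            ∀ x : LinearMap.range C,
              φ (C.restrict (fun y (_ : y ∈ LinearMap.range C) =>
                LinearMap.mem_range_self C y) x) = C' (φ x)) := by
  constructor
  · intro a a' b b' hab hba hab' hba'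
    -- basic facts
    have hba_fun : ⇑b ∘ ⇑a = ⇑C' := by rw [← LinearMap.coe_comp, hba]
    have hba'_fun : ⇑b' ∘ ⇑a' = ⇑C' := by rw [← LinearMap.coe_comp, hba']
    have ha : Function.Injective a := by
      have : Function.Injective (⇑b ∘ ⇑a) := by rw [hba_fun]; exact hC'.1
      exact this.of_comp
    have ha' : Function.Injective a' := by
      have : Function.Injective (⇑b' ∘ ⇑a') := by rw [hba'_fun]; exact hC'.1
      exact this.of_comp
    have hbs : Function.Surjective b := by
      have : Function.Surjective (⇑b ∘ ⇑a) := by rw [hba_fun]; exact hC'.2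
      exact this.of_comp
    have hbs' : Function.Surjective b' := by
      have : Function.Surjective (⇑b' ∘ ⇑a') := by rw [hba'_fun]; exact hC'.2
      exact this.of_comp
    have hbav : ∀ v, b (a v) = C' v := fun v => congrFun hba_fun v
    have hbav' : ∀ v, b' (a' v) = C' v := fun v => congrFun hba'_fun v
    have habw : ∀ w, a (b w) = C w := fun w => by
      rw [← hab]; rfl
    have habw' : ∀ w, a' (b' w) = C w := fun w => by
      rw [← hab']; rfl
    -- IsCompl (range a) (ker b)
    have hcompl : IsCompl (LinearMap.range a) (LinearMap.ker b) := by
      constructor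
      · rw [disjoint_def]
        rintro x ⟨v, rfl⟩ hx
        rw [LinearMap.mem_ker, hbav] at hx
        have : v = 0 := hC'.1 (by simpa using hx)
        simp [this]
      · rw [codisjoint_iff, eq_top_iff]
        intro w _
        obtain ⟨v, hv⟩ := hC'.2 (b w)
        refine mem_sup.2 ⟨a v, ⟨v, rfl⟩, w - a v, ?_, by abel⟩
        rw [LinearMap.mem_ker, map_sub, hbav, hv, sub_self]
    have hcompl' : IsCompl (LinearMap.range a') (LinearMap.ker b') := by
      constructor
      · rw [disjoint_def]
        rintro x ⟨v, rfl⟩ hx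
        rw [LinearMap.mem_ker, hbav'] at hx
        have : v = 0 := hC'.1 (by simpa using hx)
        simp [this]
      · rw [codisjoint_iff, eq_top_iff]
        intro w _
        obtain ⟨v, hv⟩ := hC'.2 (b' w)
        refine mem_sup.2 ⟨a' v, ⟨v, rfl⟩, w - a' v, ?_, by abel⟩
        rw [LinearMap.mem_ker, map_sub, hbav', hv, sub_self]
    -- equal finranks of kernels
    have hk : finrank ℂ (LinearMap.ker b) = finrank ℂ (LinearMap.ker b') := by
      have h1 := LinearMap.finrank_range_add_finrank_ker b
      have h2 := LinearMap.finrank_range_add_finrank_ker b'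
      rw [LinearMap.range_eq_top.2 hbs, finrank_top] at h1
      rw [LinearMap.range_eq_top.2 hbs', finrank_top] at h2
      omega
    let e1 : (LinearMap.range a) ≃ₗ[ℂ] (LinearMap.range a') :=
      (LinearEquiv.ofInjective a ha).symm.trans (LinearEquiv.ofInjective a' ha')
    let e2 : (LinearMap.ker b) ≃ₗ[ℂ] (LinearMap.ker b') := LinearEquiv.ofFinrankEq _ _ hk
    let gW : W ≃ₗ[ℂ] W :=
      (Submodule.prodEquivOfIsCompl _ _ hcompl).symm.trans
        ((e1.prodCongr e2).trans (Submodule.prodEquivOfIsCompl _ _ hcompl'))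
    -- computation of gW on range a and on ker b
    have hgWa : ∀ v, gW (a v) = a' v := by
      intro v
      have : (a v : W) = ((LinearEquiv.ofInjective a ha v : LinearMap.range a) : W) := rfl
      simp only [gW, LinearEquiv.trans_apply, this,
        Submodule.prodEquivOfIsCompl_symm_apply_left, LinearEquiv.prodCongr_apply]
      simp [e1]
    have hgWk : ∀ k : LinearMap.ker b, gW k = (e2 k : W) := by
      intro k
      simp only [gW, LinearEquiv.trans_apply,
        Submodule.prodEquivOfIsCompl_symm_apply_right, LinearEquiv.prodCongr_apply]
      simp
    have hdecomp : ∀ w : W, ∃ v : V, ∃ k : LinearMap.ker b, w = a v + k := by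
      intro w
      have : w ∈ LinearMap.range a ⊔ LinearMap.ker b := by
        rw [hcompl.sup_eq_top]; trivial
      obtain ⟨x, ⟨v, rfl⟩, y, hy, h⟩ := mem_sup.1 this
      exact ⟨v, ⟨y, hy⟩, h.symm⟩
    refine ⟨LinearEquiv.refl ℂ V, gW, ?_, ?_, ?_⟩
    · apply LinearMap.ext
      intro w
      obtain ⟨v, k, rfl⟩ := hdecomp w
      have hCk : C k = 0 := by rw [← habw, k.2, map_zero]
      have hCk' : C (gW k) = 0 := by
        rw [hgWk, ← habw', (e2 k).2, map_zero]
      simp only [LinearMap.comp_apply, LinearEquiv.coe_coe, map_add, hCk, hCk', add_zero,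
        map_zero]
      rw [← habw (a v), hbav, hgWa, hgWa, ← habw' (a' v), hbav']
    · apply LinearMap.ext
      intro v
      simp only [LinearMap.comp_apply, LinearEquiv.coe_coe, LinearEquiv.refl_symm,
        LinearEquiv.refl_apply]
      exact (hgWa v).symm
    · apply LinearMap.ext
      intro w
      simp only [LinearMap.comp_apply, LinearEquiv.coe_coe, LinearEquiv.refl_apply]
      obtain ⟨v, k, hw⟩ := hdecomp (gW.symm w)
      have hwk : w = gW (a v + k) := by rw [← hw, gW.apply_symm_apply]
      rw [hw, hwk]
      simp only [map_add, hgWa, hgWk]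
      have h3 : b' ((e2 k : W)) = 0 := (e2 k).2
      have hbk : b (k : W) = 0 := k.2
      rw [hbav', hbav, h3, hbk]
  · constructor
    · rintro ⟨a, b, hab, hba⟩
      have hba_fun : ⇑b ∘ ⇑a = ⇑C' := by rw [← LinearMap.coe_comp, hba]
      have ha : Function.Injective a := by
        have : Function.Injective (⇑b ∘ ⇑a) := by rw [hba_fun]; exact hC'.1
        exact this.of_comp
      have hbav : ∀ v, b (a v) = C' v := fun v => congrFun hba_fun v
      have habw : ∀ w, a (b w) = C w := fun w => by rw [← hab]; rfl
      have hrange : LinearMap.range C = LinearMap.range a := by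
        apply Submodule.eq_of_le_of_finrank_eq
        · rintro x ⟨w, rfl⟩
          exact ⟨b w, habw w⟩
        · rw [hdim, (LinearEquiv.ofInjective a ha).finrank_eq]
      let φ : (LinearMap.range C) ≃ₗ[ℂ] V :=
        (LinearEquiv.ofEq _ _ hrange).trans (LinearEquiv.ofInjective a ha).symm
      have key : ∀ x : LinearMap.range C, a (φ x) = (x : W) := by
        intro x
        exact LinearEquiv.ofInjective_symm_apply (f := a) (h := ha) ((LinearEquiv.ofEq _ _ hrange) x)
      refine ⟨φ, fun x => ha ?_⟩
      rw [key]
      have h1 : ((C.restrict (fun y (_ : y ∈ LinearMap.range C) =>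
          LinearMap.mem_range_self C y) x : LinearMap.range C) : W) = C (x : W) := rfl
      rw [h1, ← key x, ← habw (a (φ x)), hbav]
    · rintro ⟨φ, hφ⟩
      refine ⟨(LinearMap.range C).subtype ∘ₗ (φ.symm : V →ₗ[ℂ] LinearMap.range C),
        φ.toLinearMap ∘ₗ C.rangeRestrict, ?_, ?_⟩
      · apply LinearMap.ext
        intro w
        simp [LinearMap.comp_apply]
      · apply LinearMap.ext
        intro v
        have := hφ (φ.symm v)
        simp only [LinearEquiv.apply_symm_apply] at this
        simp only [LinearMap.comp_apply, LinearEquiv.coe_coe, Submodule.coe_subtype]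
        rw [← this]
        congr 1
end

section
/- Let X_1, ..., X_m ∈ GL_N(ℂ) act irreducibly on ℂ^N with X_1⋯X_m = 1. Then Σ_{k=1}^m Im(Ad(X_1⋯X_k) - 1) = sl_N(ℂ), i.e., every traceless N×N matrix is a sum of matrices of the form g_k P g_k^{-1} - P with g_k = X_1⋯X_k. -/
open Matrix LinearMap

/-- If `X_1, …, X_m ∈ GL_N(ℂ)` with `X_1 ⋯ X_m = 1` act irreducibly on `ℂ^N`, then
`∑_{k=1}^m Im (Ad(X_1 ⋯ X_k) - 1) = sl_N(ℂ)`: every traceless matrix `P` is a sum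
`∑_k (g_k Q_k g_k⁻¹ - Q_k)` with `g_k = X_1 ⋯ X_k`. -/
theorem stmt_9 (N m : ℕ) (hN : 0 < N)
    (X : Fin m → Matrix (Fin N) (Fin N) ℂ)
    (hX : ∀ k, IsUnit (X k))
    (hprod : (List.ofFn X).prod = 1)
    (hirr : ∀ p : Submodule ℂ (Fin N → ℂ),
      (∀ k, ∀ v ∈ p, (X k).mulVec v ∈ p) → p = ⊥ ∨ p = ⊤)
    (P : Matrix (Fin N) (Fin N) ℂ) (hP : P.trace = 0) :
    ∃ Q : Fin m → Matrix (Fin N) (Fin N) ℂ,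
      P = ∑ k : Fin m,
        (((List.ofFn X).take ((k : ℕ) + 1)).prod * Q k *
            (((List.ofFn X).take ((k : ℕ) + 1)).prod)⁻¹ - Q k) := by
  classical
  set h : ℕ → Matrix (Fin N) (Fin N) ℂ := fun n => ((List.ofFn X).take n).prod with hh
  -- each partial product is a unit
  have hunit : ∀ n, IsUnit (h n) := by
    intro n
    induction n with
    | zero => simp [hh]
    | succ n ih =>
      show IsUnit ((List.ofFn X).take (n + 1)).prod
      rw [List.take_succ, List.prod_append]
      refine (ih.mul ?_)
      rcases lt_or_ge n m with hn | hn
      · rw [List.getElem?_eq_getElem (by simpa using hn)]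
        simpa using hX ⟨n, hn⟩
      · rw [List.getElem?_eq_none (by simpa using hn)]
        simp
  have hstep : ∀ k : Fin m, h ((k : ℕ) + 1) = h k * X k := by
    intro k
    show ((List.ofFn X).take ((k : ℕ) + 1)).prod = ((List.ofFn X).take (k : ℕ)).prod * X k
    rw [List.take_succ, List.prod_append,
      List.getElem?_eq_getElem (by simpa using k.isLt)]
    simp
  -- the linear maps L k and Φ
  set L : Fin m → (Matrix (Fin N) (Fin N) ℂ →ₗ[ℂ] Matrix (Fin N) (Fin N) ℂ) := fun k =>
    (LinearMap.mulRight ℂ (h ((k : ℕ) + 1))⁻¹).comp (LinearMap.mulLeft ℂ (h ((k : ℕ) + 1)))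
      - LinearMap.id with hL
  have hLapp : ∀ (k : Fin m) (Q : Matrix (Fin N) (Fin N) ℂ),
      L k Q = h ((k : ℕ) + 1) * Q * (h ((k : ℕ) + 1))⁻¹ - Q := by
    intro k Q; simp [hL, LinearMap.mulRight_apply, LinearMap.mulLeft_apply, mul_assoc]
  set Φ : (Fin m → Matrix (Fin N) (Fin N) ℂ) →ₗ[ℂ] Matrix (Fin N) (Fin N) ℂ :=
    ∑ k : Fin m, (L k).comp (LinearMap.proj k) with hΦ
  have hΦapp : ∀ Q : Fin m → Matrix (Fin N) (Fin N) ℂ, Φ Q = ∑ k : Fin m, L k (Q k) := by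
    intro Q; simp [hΦ]
  -- main claim: P ∈ range Φ
  have hmem : P ∈ LinearMap.range Φ := by
    by_contra hPmem
    obtain ⟨f, hfP, hfbot⟩ :=
      (LinearMap.range Φ).exists_dual_map_eq_bot_of_notMem hPmem inferInstance
    have hfzero : ∀ Q, f (Φ Q) = 0 := by
      intro Q
      have : f (Φ Q) ∈ (LinearMap.range Φ).map f :=
        Submodule.mem_map_of_mem (LinearMap.mem_range_self _ _)
      rwa [hfbot, Submodule.mem_bot] at this
    -- the matrix representing f via the trace form
    set S : Matrix (Fin N) (Fin N) ℂ :=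
      Matrix.of (fun i j => f (Matrix.single j i 1)) with hS
    have ftr : ∀ Q : Matrix (Fin N) (Fin N) ℂ, f Q = (S * Q).trace := by
      intro Q
      have h1 : f Q = ∑ i : Fin N, ∑ j : Fin N, Q i j * S j i := by
        conv_lhs => rw [Matrix.matrix_eq_sum_single Q]
        rw [map_sum]
        refine Finset.sum_congr rfl fun i _ => ?_
        rw [map_sum]
        refine Finset.sum_congr rfl fun j _ => ?_
        have heq : Matrix.single i j (Q i j) = Q i j • Matrix.single i j 1 := by
          rw [Matrix.smul_single, smul_eq_mul, mul_one]
        rw [heq, LinearMap.map_smul, smul_eq_mul]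
        rfl
      have h2 : (S * Q).trace = ∑ i : Fin N, ∑ j : Fin N, S i j * Q j i := by
        simp [Matrix.trace, Matrix.diag, Matrix.mul_apply]
      rw [h1, h2, Finset.sum_comm]
      exact Finset.sum_congr rfl fun i _ => Finset.sum_congr rfl fun j _ => mul_comm _ _
    -- trace against a standard basis matrix extracts an entry
    have entry : ∀ (T : Matrix (Fin N) (Fin N) ℂ) (i j : Fin N),
        (T * Matrix.single j i 1).trace = T i j := by
      intro T i j
      rw [Matrix.trace, Finset.sum_eq_single i
        (fun a _ ha => by
          simpa using Matrix.mul_single_apply_of_ne 1 j i a a ha T)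
        (fun hi => absurd (Finset.mem_univ i) hi)]
      simpa using Matrix.mul_single_apply_same 1 j i i T
    -- S commutes with each partial product
    have hScomm : ∀ n, S * h n = h n * S := by
      have key : ∀ k : Fin m, S * h ((k : ℕ) + 1) = h ((k : ℕ) + 1) * S := by
        intro k
        set g := h ((k : ℕ) + 1) with hg
        have hgu : IsUnit g := hunit _
        have hdet := (Matrix.isUnit_iff_isUnit_det g).mp hgu
        have hginv : g * g⁻¹ = 1 := Matrix.mul_nonsing_inv g hdet
        have hinvg : g⁻¹ * g = 1 := Matrix.nonsing_inv_mul g hdet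
        have hT : ∀ Q, ((g⁻¹ * S * g - S) * Q).trace = 0 := by
          intro Q
          have hz := hfzero (Pi.single k Q)
          rw [hΦapp] at hz
          rw [Finset.sum_eq_single k (fun j _ hj => by
            rw [hLapp]; simp [Pi.single_eq_of_ne hj]) (by simp)] at hz
          rw [hLapp, Pi.single_eq_same, map_sub, ftr, ftr, sub_eq_zero] at hz
          rw [Matrix.sub_mul, Matrix.trace_sub, sub_eq_zero]
          calc ((g⁻¹ * S * g) * Q).trace
              = (g⁻¹ * (S * g * Q)).trace := by simp only [Matrix.mul_assoc]
            _ = ((S * g * Q) * g⁻¹).trace := Matrix.trace_mul_comm _ _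
            _ = (S * (g * Q * g⁻¹)).trace := by simp only [Matrix.mul_assoc]
            _ = (S * Q).trace := hz
        have hT0 : g⁻¹ * S * g = S := by
          rw [← sub_eq_zero]
          ext i j
          have := hT (Matrix.single j i 1)
          rw [entry] at this
          simpa using this
        calc S * g = g * g⁻¹ * (S * g) := by rw [hginv, one_mul]
          _ = g * (g⁻¹ * S * g) := by simp only [Matrix.mul_assoc]
          _ = g * S := by rw [hT0]
      intro n
      rcases n with _ | n
      · show S * (1 : Matrix (Fin N) (Fin N) ℂ) = 1 * S
        simp
      · rcases lt_or_ge n m with hn | hn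
        · exact key ⟨n, hn⟩
        · have h1 : h (n + 1) = 1 := by
            show ((List.ofFn X).take (n + 1)).prod = 1
            rw [List.take_of_length_le (by simpa using hn.trans (Nat.le_succ n))]
            exact hprod
          rw [h1, mul_one, one_mul]
    -- S commutes with each X k
    have hSX : ∀ k : Fin m, S * X k = X k * S := by
      intro k
      have hk : S * h (k : ℕ) = h (k : ℕ) * S := hScomm k
      have hk1 : S * h ((k : ℕ) + 1) = h ((k : ℕ) + 1) * S := hScomm _
      have hdet := (Matrix.isUnit_iff_isUnit_det (h (k : ℕ))).mp (hunit _)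
      have hinv : (h (k : ℕ))⁻¹ * h (k : ℕ) = 1 := Matrix.nonsing_inv_mul _ hdet
      have hinv' : h (k : ℕ) * (h (k : ℕ))⁻¹ = 1 := Matrix.mul_nonsing_inv _ hdet
      have hXk : X k = (h (k : ℕ))⁻¹ * h ((k : ℕ) + 1) := by
        rw [hstep k, ← Matrix.mul_assoc, hinv, Matrix.one_mul]
      have hSinv : S * (h (k : ℕ))⁻¹ = (h (k : ℕ))⁻¹ * S := by
        calc S * (h (k : ℕ))⁻¹
            = (h (k : ℕ))⁻¹ * (h (k : ℕ) * S) * (h (k : ℕ))⁻¹ := by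
              rw [← Matrix.mul_assoc, hinv, Matrix.one_mul]
          _ = (h (k : ℕ))⁻¹ * (S * h (k : ℕ)) * (h (k : ℕ))⁻¹ := by rw [hk]
          _ = (h (k : ℕ))⁻¹ * S := by
              rw [Matrix.mul_assoc ((h (k : ℕ))⁻¹), Matrix.mul_assoc, hinv', Matrix.mul_one]
      calc S * X k = S * (h (k : ℕ))⁻¹ * h ((k : ℕ) + 1) := by
            rw [hXk, Matrix.mul_assoc]
        _ = (h (k : ℕ))⁻¹ * (S * h ((k : ℕ) + 1)) := by rw [hSinv, Matrix.mul_assoc]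
        _ = (h (k : ℕ))⁻¹ * h ((k : ℕ) + 1) * S := by rw [hk1, Matrix.mul_assoc]
        _ = X k * S := by rw [← hXk]
    -- Schur's lemma: S is scalar
    haveI : Nonempty (Fin N) := Fin.pos_iff_nonempty.mp hN
    obtain ⟨μ, hμ⟩ := Module.End.exists_eigenvalue (Matrix.mulVecLin S)
    have hEinv : ∀ k, ∀ v ∈ Module.End.eigenspace (Matrix.mulVecLin S) μ,
        (X k).mulVec v ∈ Module.End.eigenspace (Matrix.mulVecLin S) μ := by
      intro k v hv
      rw [Module.End.mem_eigenspace_iff] at hv ⊢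
      rw [Matrix.mulVecLin_apply] at hv ⊢
      rw [Matrix.mulVec_mulVec, hSX k, ← Matrix.mulVec_mulVec, hv, Matrix.mulVec_smul]
    rcases hirr _ hEinv with hE | hE
    · exact hμ hE
    · have hSdiag : ∀ v : Fin N → ℂ, S.mulVec v = μ • v := by
        intro v
        have hv : v ∈ Module.End.eigenspace (Matrix.mulVecLin S) μ := hE ▸ Submodule.mem_top
        rw [Module.End.mem_eigenspace_iff, Matrix.mulVecLin_apply] at hv
        exact hv
      have hSid : S = μ • (1 : Matrix (Fin N) (Fin N) ℂ) := by
        ext i j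
        have hv := congrFun (hSdiag (Pi.single j 1)) i
        rw [Matrix.mulVec_single_one] at hv
        simp only [Matrix.col_apply] at hv
        rw [hv]
        simp [Matrix.one_apply, Pi.single_apply, eq_comm]
      have : f P = 0 := by
        rw [ftr, hSid, Matrix.smul_mul, Matrix.one_mul, Matrix.trace_smul, hP, smul_zero]
      exact hfP this
  obtain ⟨Q, hQ⟩ := hmem
  exact ⟨Q, by rw [← hQ, hΦapp]; exact Finset.sum_congr rfl fun k _ => by rw [hLapp]⟩
end

section
/- For the multiplication map μ: C_1 × ⋯ × C_m → SL_N(ℂ), (X_1,...,X_m) ↦ X_1⋯X_m, where C_k are fixed conjugacy classes, the differential at a point X = (X_1,...,X_m) with μ(X) = 1 sends the tangent vector ([P_1,X_1],...,[P_m,X_m]) to Σ_{k=1}^m (Ad(X_1⋯X_k)(Q_k) - Q_k) where Q_k = P_{k+1} - P_k (with P_{m+1} = 0); consequently, if (X_1,...,X_m) is an irreducible tuple, the differential dμ_X is surjective onto sl_N(ℂ). -/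
/-- For the multiplication map `μ : C_1 × ⋯ × C_m → SL_N(ℂ)` on conjugacy classes,
at a point `X` with `X_1 ⋯ X_m = 1` the differential in the direction
`([P_1,X_1], …, [P_m,X_m])`, namely `∑_k X_1⋯X_{k-1} [P_k,X_k] X_{k+1}⋯X_m`, equals
`∑_k (Ad(X_1⋯X_k)(Q_k) - Q_k)` with `Q_k = P_{k+1} - P_k` (and `P_{m+1} = 0`);
consequently, if the tuple `X` is irreducible, the differential is surjective onto
`sl_N(ℂ)`. -/
theorem stmt_10 (N m : ℕ) (hN : 0 < N)
    (X P : Fin m → Matrix (Fin N) (Fin N) ℂ)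
    (hX : ∀ k, IsUnit (X k))
    (hprod : (List.ofFn X).prod = 1) :
    (∑ k : Fin m,
        ((List.ofFn X).take (k : ℕ)).prod * (P k * X k - X k * P k) *
          ((List.ofFn X).drop ((k : ℕ) + 1)).prod
      = ∑ k : Fin m,
        (((List.ofFn X).take ((k : ℕ) + 1)).prod *
            ((if h : (k : ℕ) + 1 < m then P ⟨(k : ℕ) + 1, h⟩ else 0) - P k) *
            (((List.ofFn X).take ((k : ℕ) + 1)).prod)⁻¹
          - ((if h : (k : ℕ) + 1 < m then P ⟨(k : ℕ) + 1, h⟩ else 0) - P k)))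
    ∧ ((∀ p : Submodule ℂ (Fin N → ℂ),
          (∀ k, ∀ v ∈ p, (X k).mulVec v ∈ p) → p = ⊥ ∨ p = ⊤) →
        ∀ Z : Matrix (Fin N) (Fin N) ℂ, Z.trace = 0 →
          ∃ P' : Fin m → Matrix (Fin N) (Fin N) ℂ,
            ∑ k : Fin m,
              ((List.ofFn X).take (k : ℕ)).prod * (P' k * X k - X k * P' k) *
                ((List.ofFn X).drop ((k : ℕ) + 1)).prod = Z) := by
  set L := List.ofFn X with hL
  have hlen : L.length = m := by simp [hL]
  set A : ℕ → Matrix (Fin N) (Fin N) ℂ := fun k => (L.take k).prod with hA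
  have hA0 : A 0 = 1 := by simp [hA]
  have hAm : ∀ k, m ≤ k → A k = 1 := by
    intro k hk
    rw [hA]
    simp only []
    rw [List.take_of_length_le (by rw [hlen]; exact hk)]
    exact hprod
  have hAsucc : ∀ k : Fin m, A (↑k + 1) = A ↑k * X k := by
    intro k
    rw [hA]
    simp only []
    rw [List.prod_take_succ _ _ (by rw [hlen]; exact k.isLt)]
    congr 1
    simp [hL]
  have hAunit : ∀ k, IsUnit (A k) := by
    intro k
    apply List.prod_isUnit
    intro a ha
    have := List.take_subset k L ha
    rw [hL, List.mem_ofFn] at this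
    obtain ⟨i, rfl⟩ := this
    exact hX i
  have hmulinv : ∀ k, A k * (A k)⁻¹ = 1 := fun k =>
    Matrix.mul_nonsing_inv _ ((Matrix.isUnit_iff_isUnit_det _).mp (hAunit k))
  have hinvmul : ∀ k, (A k)⁻¹ * A k = 1 := fun k =>
    Matrix.nonsing_inv_mul _ ((Matrix.isUnit_iff_isUnit_det _).mp (hAunit k))
  have hdrop : ∀ k : Fin m, (L.drop (↑k + 1)).prod = (A (↑k + 1))⁻¹ := by
    intro k
    refine (Matrix.inv_eq_right_inv ?_).symm
    rw [hA]
    simp only []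
    rw [List.prod_take_mul_prod_drop]
    exact hprod
  have hXA : ∀ k : Fin m, X k * (A (↑k + 1))⁻¹ = (A ↑k)⁻¹ := by
    intro k
    rw [hAsucc k, Matrix.mul_inv_rev, ← Matrix.mul_assoc,
      Matrix.mul_nonsing_inv _ ((Matrix.isUnit_iff_isUnit_det _).mp (hX k)), Matrix.one_mul]
  have htake : ∀ n, (L.take n).prod = A n := fun _ => rfl
  constructor
  · simp only [htake, hdrop]
    set g : ℕ → Matrix (Fin N) (Fin N) ℂ := fun n => if h : n < m then P ⟨n, h⟩ else 0 with hg
    set F : ℕ → Matrix (Fin N) (Fin N) ℂ := fun n => A n * g n * (A n)⁻¹ with hF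
    have hgk : ∀ k : Fin m, g ↑k = P k := by intro k; simp [hg, k.isLt]
    have hgm : g m = 0 := by simp [hg]
    have key : ∀ k : Fin m,
        A ↑k * (P k * X k - X k * P k) * (A (↑k + 1))⁻¹
        - (A (↑k + 1) * (g (↑k + 1) - P k) * (A (↑k + 1))⁻¹ - (g (↑k + 1) - P k))
        = (F ↑k - F (↑k + 1)) - (g ↑k - g (↑k + 1)) := by
      intro k
      have e1 : A ↑k * (P k * X k - X k * P k) * (A (↑k + 1))⁻¹
          = A ↑k * P k * (A ↑k)⁻¹ - A (↑k + 1) * P k * (A (↑k + 1))⁻¹ := by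
        have e2 : A ↑k * (X k * P k) * (A (↑k + 1))⁻¹ = A (↑k + 1) * P k * (A (↑k + 1))⁻¹ := by
          rw [hAsucc k]; noncomm_ring
        have e3 : A ↑k * (P k * X k) * (A (↑k + 1))⁻¹ = A ↑k * P k * (A ↑k)⁻¹ := by
          rw [← hXA k]; noncomm_ring
        rw [Matrix.mul_sub, Matrix.sub_mul, e3, e2]
      rw [e1, hF, hgk k]
      simp only []
      rw [hgk k]
      noncomm_ring
    calc ∑ k : Fin m, A ↑k * (P k * X k - X k * P k) * (A (↑k + 1))⁻¹
        = ∑ k : Fin m, ((A (↑k + 1) * (g (↑k + 1) - P k) * (A (↑k + 1))⁻¹ - (g (↑k + 1) - P k))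
            + ((F ↑k - F (↑k + 1)) - (g ↑k - g (↑k + 1)))) := by
          refine Finset.sum_congr rfl fun k _ => ?_
          rw [← key k]; abel
      _ = ∑ k : Fin m, (A (↑k + 1) * (g (↑k + 1) - P k) * (A (↑k + 1))⁻¹ - (g (↑k + 1) - P k)) := by
          rw [Finset.sum_add_distrib]
          have h2 : ∑ k : Fin m, ((F ↑k - F (↑k + 1)) - (g ↑k - g (↑k + 1))) = 0 := by
            rw [Fin.sum_univ_eq_sum_range (fun n => (F n - F (n + 1)) - (g n - g (n + 1)))]
            rw [Finset.sum_sub_distrib, Finset.sum_range_sub' F, Finset.sum_range_sub' g]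
            have hFm : F m = 0 := by rw [hF]; simp only []; rw [hgm]; simp
            have hF0 : F 0 = g 0 := by rw [hF]; simp only []; rw [hA0]; simp
            rw [hFm, hF0, hgm, sub_zero]
            abel
          rw [h2, add_zero]
      _ = _ := by
          refine Finset.sum_congr rfl fun k _ => ?_
          have : (if h : (k : ℕ) + 1 < m then P ⟨(k : ℕ) + 1, h⟩ else 0) = g (↑k + 1) := rfl
          rw [this]
  · intro hirr Z hZ
    simp only [htake, hdrop]
    let T : (Fin m → Matrix (Fin N) (Fin N) ℂ) →ₗ[ℂ] Matrix (Fin N) (Fin N) ℂ :=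
      { toFun := fun Q => ∑ k : Fin m, A ↑k * (Q k * X k - X k * Q k) * (A (↑k + 1))⁻¹
        map_add' := by
          intro Q Q'
          rw [← Finset.sum_add_distrib]
          refine Finset.sum_congr rfl fun k _ => ?_
          simp only [Pi.add_apply]
          noncomm_ring
        map_smul' := by
          intro c Q
          rw [RingHom.id_apply, Finset.smul_sum]
          refine Finset.sum_congr rfl fun k _ => ?_
          simp only [Pi.smul_apply, smul_mul_assoc, mul_smul_comm, ← smul_sub] }
    suffices hZT : Z ∈ LinearMap.range T by
      obtain ⟨P', hP'⟩ := hZT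
      exact ⟨P', hP'⟩
    by_contra hzn
    obtain ⟨f, hfZ, hmap⟩ := Submodule.exists_dual_map_eq_bot_of_notMem hzn inferInstance
    have hf0 : ∀ Q, f (T Q) = 0 := by
      intro Q
      have h1 : f (T Q) ∈ (LinearMap.range T).map f :=
        Submodule.mem_map_of_mem ⟨Q, rfl⟩
      rw [hmap, Submodule.mem_bot] at h1
      exact h1
    -- represent f by a matrix W
    set W : Matrix (Fin N) (Fin N) ℂ := Matrix.of (fun i j => f (Matrix.single j i 1)) with hW
    have htr : ∀ Y : Matrix (Fin N) (Fin N) ℂ, f Y = (Y * W).trace := by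
      intro Y
      conv_lhs => rw [Matrix.matrix_eq_sum_single Y]
      rw [map_sum]
      simp only [map_sum]
      rw [Matrix.trace]
      simp only [Matrix.diag_apply, Matrix.mul_apply]
      refine Finset.sum_congr rfl fun i _ => ?_
      refine Finset.sum_congr rfl fun j _ => ?_
      have : Matrix.single i j (Y i j) = (Y i j) • Matrix.single i j 1 := by
        rw [Matrix.smul_single, smul_eq_mul, mul_one]
      rw [this, map_smul, smul_eq_mul, hW]
      simp [Matrix.of_apply, mul_comm]
    -- trace nondegeneracy
    have htrz : ∀ Mt : Matrix (Fin N) (Fin N) ℂ, (∀ Pm : Matrix (Fin N) (Fin N) ℂ, (Pm * Mt).trace = 0) → Mt = 0 := by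
      intro Mt h
      ext i j
      have := h (Matrix.single j i 1)
      simpa [Matrix.trace, Matrix.diag_apply, Matrix.mul_apply, Matrix.single,
        Matrix.of_apply, ite_and, Finset.sum_ite_eq, Finset.sum_ite_eq'] using this
    -- single-direction vanishing
    have hsingle : ∀ (k : Fin m) (P0 : Matrix (Fin N) (Fin N) ℂ),
        ((A ↑k * (P0 * X k - X k * P0) * (A (↑k + 1))⁻¹) * W).trace = 0 := by
      intro k P0
      have h1 : T (Pi.single k P0) = A ↑k * (P0 * X k - X k * P0) * (A (↑k + 1))⁻¹ := by
        show (∑ j : Fin m, A ↑j * ((Pi.single k P0 : Fin m → Matrix (Fin N) (Fin N) ℂ) j * X j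
            - X j * (Pi.single k P0 : Fin m → Matrix (Fin N) (Fin N) ℂ) j) * (A (↑j + 1))⁻¹) = _
        rw [Finset.sum_eq_single_of_mem k (Finset.mem_univ k)]
        · rw [Pi.single_eq_same]
        · intro j _ hj
          rw [Pi.single_eq_of_ne hj]
          simp
      rw [← htr, ← h1, hf0]
    -- conjugates of W are constant
    have hstep : ∀ k : Fin m, (A ↑k)⁻¹ * W * A ↑k = (A (↑k + 1))⁻¹ * W * A (↑k + 1) := by
      intro k
      have key : ∀ P0 : Matrix (Fin N) (Fin N) ℂ,
          (P0 * ((A ↑k)⁻¹ * W * A ↑k - (A (↑k + 1))⁻¹ * W * A (↑k + 1))).trace = 0 := by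
        intro P0
        have h1 := hsingle k P0
        have e1 : (A ↑k * (P0 * X k - X k * P0) * (A (↑k + 1))⁻¹) * W
            = A ↑k * ((P0 * X k - X k * P0) * ((A (↑k + 1))⁻¹ * W)) := by noncomm_ring
        rw [e1, Matrix.trace_mul_comm] at h1
        have e2 : (P0 * X k - X k * P0) * ((A (↑k + 1))⁻¹ * W) * A ↑k
            = P0 * (X k * (A (↑k + 1))⁻¹ * W * A ↑k) - X k * (P0 * ((A (↑k + 1))⁻¹ * W * A ↑k)) := by
          noncomm_ring
        rw [e2] at h1
        rw [Matrix.trace_sub, Matrix.trace_mul_comm (X k)] at h1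
        have e3 : P0 * ((A (↑k + 1))⁻¹ * W * A ↑k) * X k
            = P0 * ((A (↑k + 1))⁻¹ * W * (A ↑k * X k)) := by noncomm_ring
        rw [e3, ← hAsucc k, hXA k] at h1
        rw [Matrix.mul_sub, Matrix.trace_sub]
        convert h1 using 3 <;> noncomm_ring
      have := htrz _ key
      rwa [sub_eq_zero] at this
    have hconst : ∀ k, k ≤ m → (A k)⁻¹ * W * A k = W := by
      intro k
      induction k with
      | zero =>
        intro _
        have h1 : (1 : Matrix (Fin N) (Fin N) ℂ)⁻¹ = 1 := Matrix.inv_eq_right_inv (by simp)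
        rw [hA0, h1, Matrix.one_mul, Matrix.mul_one]
      | succ n ih =>
        intro hn
        have hn' : n < m := by omega
        rw [← hstep ⟨n, hn'⟩]
        exact ih (by omega)
    have hAW : ∀ k, k ≤ m → A k * W = W * A k := by
      intro k hk
      have h1 := hconst k hk
      calc A k * W = A k * ((A k)⁻¹ * W * A k) := by rw [h1]
      _ = (A k * (A k)⁻¹) * W * A k := by noncomm_ring
      _ = W * A k := by rw [hmulinv, Matrix.one_mul]
    have hWX : ∀ k : Fin m, W * X k = X k * W := by
      intro k
      have h1 : A ↑k * (X k * W) = A ↑k * (W * X k) := by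
        have e1 : A ↑k * (X k * W) = A (↑k + 1) * W := by rw [hAsucc k]; noncomm_ring
        have e2 : A ↑k * (W * X k) = (A ↑k * W) * X k := by noncomm_ring
        rw [e1, hAW (↑k + 1) k.isLt, e2, hAW ↑k (le_of_lt k.isLt)]
        rw [hAsucc k]; noncomm_ring
      exact ((hAunit ↑k).mul_right_injective h1).symm
    -- Schur's lemma
    haveI : Nonempty (Fin N) := ⟨⟨0, hN⟩⟩
    obtain ⟨c, hc⟩ := Module.End.exists_eigenvalue (Matrix.mulVecLin W : Module.End ℂ (Fin N → ℂ))
    obtain ⟨v, hv⟩ := hc.exists_hasEigenvector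
    set p : Submodule ℂ (Fin N → ℂ) :=
      LinearMap.ker ((Matrix.mulVecLin W : Module.End ℂ (Fin N → ℂ)) - c • LinearMap.id) with hp
    have hmem : ∀ u, u ∈ p ↔ W.mulVec u = c • u := by
      intro u
      rw [hp, LinearMap.mem_ker, LinearMap.sub_apply, LinearMap.smul_apply, LinearMap.id_apply,
        sub_eq_zero, Matrix.mulVecLin_apply]
    have hinvt : ∀ k, ∀ u ∈ p, (X k).mulVec u ∈ p := by
      intro k u hu
      rw [hmem] at hu ⊢
      rw [Matrix.mulVec_mulVec, hWX k, ← Matrix.mulVec_mulVec, hu, Matrix.mulVec_smul]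
    have hvp : v ∈ p := by
      rw [hmem]
      have := hv.apply_eq_smul
      rwa [Matrix.mulVecLin_apply] at this
    rcases hirr p hinvt with hbot | htop
    · rw [hbot, Submodule.mem_bot] at hvp
      exact hv.2 hvp
    · have hWc : W = c • (1 : Matrix (Fin N) (Fin N) ℂ) := by
        have h1 : ∀ u : Fin N → ℂ, W.mulVec u = c • u := by
          intro u
          exact (hmem u).mp (by rw [htop]; trivial)
        ext i j
        have h2 := congrFun (h1 (Pi.single j 1)) i
        simpa [Matrix.mulVec, dotProduct, Pi.single_apply, Matrix.one_apply, mul_comm] using h2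
      apply hfZ
      rw [htr Z, hWc, Matrix.mul_smul, Matrix.mul_one, Matrix.trace_smul, hZ, smul_zero]
end

section
/- With notation as in the previous statement, the operator x = Y_n - ν Σ_{j<n} s_{nj} acting on the nℓ-dimensional span of the v_{ij} is conjugate to (λ_ℓ Id_n - ν T) ⊕ diag(λ_1,...,λ_{ℓ-1}) ⊗ Id_n, where T is the n×n matrix with 0 on the diagonal and 1 off the diagonal. -/
/-- The operator `x = Y_n - ν ∑_{j<n} s_{nj}` acting on the `nℓ`-dimensional span of
the `v_{ij}`, whose matrix `M` in the basis `v_{ij}` is given by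
`x v_{ij} = λ_j v_{ij} - ν δ_{j,ℓ} ∑_{p≠i} ∑_q v_{pq}`, is conjugate to
`(λ_ℓ Id_n - ν T) ⊕ diag(λ_1, …, λ_{ℓ-1}) ⊗ Id_n` (the matrix `D` below), where `T`
is the `n × n` matrix with `0` on the diagonal and `1` off the diagonal.  The
parameters `λ_1, …, λ_ℓ` are distinct and generic. -/
theorem stmt_15 (n ℓ : ℕ) (hn : 0 < n) (hℓ : 0 < ℓ)
    (lam : Fin ℓ → ℂ) (ν : ℂ) (hlam : Function.Injective lam)
    (hgen1 : ∀ j : Fin ℓ, (j : ℕ) ≠ ℓ - 1 →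
      lam j ≠ lam ⟨ℓ - 1, by omega⟩ - ((n : ℂ) - 1) * ν)
    (hgen2 : ∀ j : Fin ℓ, (j : ℕ) ≠ ℓ - 1 → lam j ≠ lam ⟨ℓ - 1, by omega⟩ + ν)
    (M D : Matrix (Fin n × Fin ℓ) (Fin n × Fin ℓ) ℂ)
    (hM : ∀ p q i j, M (p, q) (i, j) =
      (if p = i ∧ q = j then lam j else 0) -
        (if (j : ℕ) = ℓ - 1 ∧ p ≠ i then ν else 0))
    (hD : ∀ p q i j, D (p, q) (i, j) =
      if q = j then
        (if (q : ℕ) = ℓ - 1 then (if p = i then lam q else -ν)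
          else (if p = i then lam q else 0))
      else 0) :
    ∃ g : GL (Fin n × Fin ℓ) ℂ,
      M = (g : Matrix (Fin n × Fin ℓ) (Fin n × Fin ℓ) ℂ) * D *
        ((g⁻¹ : GL (Fin n × Fin ℓ) ℂ) : Matrix (Fin n × Fin ℓ) (Fin n × Fin ℓ) ℂ) := by
  classical
  set L : Fin ℓ := ⟨ℓ - 1, by omega⟩ with hLdef
  have hcoe : ∀ s : Fin ℓ, ((s : ℕ) = ℓ - 1) ↔ s = L := by
    intro s; constructor
    · intro h; exact Fin.ext h
    · intro h; rw [h]
  obtain ⟨μ, hμ⟩ : ∃ μ : Fin ℓ → ℂ, μ = fun q => lam q - lam L := ⟨_, rfl⟩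
  obtain ⟨d, hd⟩ : ∃ d : Fin ℓ → ℂ, d = fun q => (μ q - ν) * (μ q + ν * ((n : ℂ) - 1)) := ⟨_, rfl⟩
  have hdne : ∀ q : Fin ℓ, q ≠ L → d q ≠ 0 := by
    intro q hq
    have hq' : (q : ℕ) ≠ ℓ - 1 := fun h => hq (Fin.ext h)
    have h1 := hgen1 q hq'
    have h2 := hgen2 q hq'
    rw [hd, hμ]
    apply mul_ne_zero
    · intro h; apply h2; have : lam q - lam L - ν = 0 := h
      linear_combination this
    · intro h; apply h1; have : lam q - lam L + ν * ((n:ℂ)-1) = 0 := h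
      linear_combination this
  obtain ⟨a, ha⟩ : ∃ a : Fin ℓ → ℂ, a = fun q => -ν^2 * ((n:ℂ) - 1) / d q := ⟨_, rfl⟩
  obtain ⟨b, hb⟩ : ∃ b : Fin ℓ → ℂ, b = fun q => ν * μ q / d q := ⟨_, rfl⟩
  -- key scalar identities
  have key1 : ∀ q : Fin ℓ, q ≠ L → a q * μ q + ν * ((n:ℂ)-1) * b q = 0 := by
    intro q hq
    have hdq := hdne q hq
    rw [ha, hb]
    simp only
    rw [div_mul_eq_mul_div, ← mul_div_assoc, div_add_div _ _ hdq hdq, div_eq_zero_iff]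
    left; ring
  have key2 : ∀ q : Fin ℓ, q ≠ L → ν * a q + (μ q + ν * ((n:ℂ)-2)) * b q = ν := by
    intro q hq
    have hdq := hdne q hq
    rw [ha, hb]
    simp only
    rw [mul_div_assoc', ← mul_div_assoc, div_add_div _ _ hdq hdq, div_eq_iff (mul_ne_zero hdq hdq)]
    rw [hd, hμ]
    ring
  -- the correction matrix
  set E : Matrix (Fin n × Fin ℓ) (Fin n × Fin ℓ) ℂ := Matrix.of
    (fun pq ij => if ij.2 = L ∧ pq.2 ≠ L then (if pq.1 = ij.1 then a pq.2 else b pq.2) else 0)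
    with hE
  have hEapp : ∀ (p i : Fin n) (q j : Fin ℓ), E (p, q) (i, j) =
      if j = L ∧ q ≠ L then (if p = i then a q else b q) else 0 := by
    intro p i q j; rfl
  have hE2 : E * E = 0 := by
    ext ⟨p, q⟩ ⟨i, j⟩
    rw [Matrix.mul_apply]
    rw [Fintype.sum_prod_type]
    simp only [hEapp, Matrix.zero_apply]
    apply Finset.sum_eq_zero
    intro r _
    apply Finset.sum_eq_zero
    intro s _
    by_cases h1 : s = L ∧ q ≠ L
    · by_cases h2 : j = L ∧ s ≠ L
      · exact absurd h1.1 h2.2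
      · rw [if_neg h2, mul_zero]
    · rw [if_neg h1, zero_mul]
  have hunit1 : (1 + E) * (1 - E) = 1 := by
    have : (1 + E) * (1 - E) = 1 - E * E := by noncomm_ring
    rw [this, hE2, sub_zero]
  have hunit2 : (1 - E) * (1 + E) = 1 := by
    have : (1 - E) * (1 + E) = 1 - E * E := by noncomm_ring
    rw [this, hE2, sub_zero]
  -- the main identity: M * (1 + E) = (1 + E) * D
  have hME : M * E = Matrix.of (fun pq ij =>
      if ij.2 = L ∧ pq.2 ≠ L then lam pq.2 * (if pq.1 = ij.1 then a pq.2 else b pq.2) else 0) := by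
    ext ⟨p, q⟩ ⟨i, j⟩
    rw [Matrix.mul_apply, Fintype.sum_prod_type]
    simp only [hEapp, hM, hcoe, Matrix.of_apply]
    have hterm : ∀ r : Fin n, ∀ s : Fin ℓ,
        ((if p = r ∧ q = s then lam s else 0) - (if s = L ∧ p ≠ r then ν else 0)) *
          (if j = L ∧ s ≠ L then (if r = i then a s else b s) else 0) =
        if p = r then (if q = s then
          (if j = L ∧ s ≠ L then lam s * (if r = i then a s else b s) else 0) else 0) else 0 := by
      intro r s
      by_cases h2 : s = L ∧ p ≠ r
      · have hnot : ¬(j = L ∧ s ≠ L) := fun h => h.2 h2.1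
        rw [if_neg hnot, mul_zero, if_neg h2.2]
      · rw [if_neg h2, sub_zero]
        by_cases h3 : p = r
        · by_cases h4 : q = s
          · rw [if_pos ⟨h3, h4⟩, if_pos h3, if_pos h4]
            split_ifs <;> simp
          · rw [if_neg (fun h => h4 h.2), if_pos h3, if_neg h4, zero_mul]
        · rw [if_neg (fun h => h3 h.1), if_neg h3, zero_mul]
    simp only [hterm]
    simp [Finset.sum_ite_eq]
  have hED : E * D = Matrix.of (fun pq ij => if ij.2 = L ∧ pq.2 ≠ L then
      (if pq.1 = ij.1 then a pq.2 * lam L - ν * ((n:ℂ) - 1) * b pq.2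
        else -(ν * a pq.2) + b pq.2 * lam L - ν * ((n:ℂ) - 2) * b pq.2) else 0) := by
    ext ⟨p, q⟩ ⟨i, j⟩
    rw [Matrix.mul_apply, Fintype.sum_prod_type]
    simp only [hEapp, hD, hcoe, Matrix.of_apply]
    by_cases hq : q = L
    · simp [hq]
    · by_cases hj : j = L
      · subst hj
        simp only [hq, ne_eq, not_false_eq_true, and_true, true_and]
        rw [if_pos trivial]
        have hterm : ∀ r : Fin n, ∀ s : Fin ℓ,
            (if s = L then (if p = r then a q else b q) else 0) *
              (if s = L then (if s = L then (if r = i then lam s else -ν)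
                else (if r = i then lam s else 0)) else 0) =
            if s = L then (if p = r then a q else b q) * (if r = i then lam L else -ν) else 0 := by
          intro r s
          by_cases hs : s = L
          · subst hs; simp
          · simp [hs]
        simp only [hterm]
        simp only [Finset.sum_ite_eq', Finset.mem_univ, if_true]
        have hterm2 : ∀ r : Fin n,
            (if p = r then a q else b q) * (if r = i then lam L else -ν) =
            b q * (-ν) + ((if p = r then (a q - b q) * (-ν) else 0) +
              ((if r = i then b q * (lam L + ν) else 0) +
              (if p = r then (if r = i then (a q - b q) * (lam L + ν) else 0) else 0))) := by
          intro r
          by_cases h1 : p = r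
          · subst h1; by_cases h2 : p = i <;> simp [h2] <;> try ring
          · by_cases h2 : r = i
            · subst h2; simp [h1]; try ring
            · simp [h1, h2]; try ring
        simp only [hterm2, Finset.sum_add_distrib, Finset.sum_const, Finset.card_univ,
          Fintype.card_fin, Finset.sum_ite_eq, Finset.sum_ite_eq', Finset.mem_univ, if_true,
          nsmul_eq_mul]
        by_cases hpi : p = i <;> simp [hpi] <;> ring
      · rw [if_neg (fun h => hj h.1)]
        apply Finset.sum_eq_zero; intro r _
        apply Finset.sum_eq_zero; intro s _
        by_cases hs : s = L ∧ q ≠ L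
        · rw [if_pos hs]
          rw [if_neg (show ¬ s = j from fun h => hj (h ▸ hs.1))]
          rw [mul_zero]
        · rw [if_neg hs, zero_mul]
  have hMain : M * (1 + E) = (1 + E) * D := by
    rw [mul_add, add_mul, mul_one, one_mul, hME, hED]
    ext ⟨p, q⟩ ⟨i, j⟩
    simp only [Matrix.add_apply, Matrix.of_apply, hM, hD, hcoe]
    have hkey1 := key1
    have hkey2 := key2
    simp only [hμ] at hkey1 hkey2
    by_cases hj : j = L
    · subst hj
      by_cases hq : q = L
      · subst hq
        by_cases hpi : p = i <;> simp [hpi] <;> try ring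
      · have h1 := hkey1 q hq
        have h2 := hkey2 q hq
        simp only [hq, ne_eq, not_false_eq_true, and_true, true_and, if_true,
          and_false, if_false, false_and]
        split_ifs with h'
        · linear_combination h1
        · linear_combination h2
    · by_cases hqj : q = j
      · subst hqj
        have hq : ¬ q = L := hj
        simp [hq, hj]
      · simp [hj, hqj, fun h : p = i ∧ q = j => hqj h.2]
  refine ⟨⟨1 + E, 1 - E, hunit1, hunit2⟩, ?_⟩
  show M = (1 + E) * D * (1 - E)
  calc M = M * ((1 + E) * (1 - E)) := by rw [hunit1, mul_one]
  _ = M * (1 + E) * (1 - E) := by rw [mul_assoc]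
  _ = (1 + E) * D * (1 - E) := by rw [hMain]
end

section
/- The specialization of the GDAHA H_n at t = 1 is isomorphic to the semidirect product ℂ[S_n] ⋉ H_1^{⊗n}, where H_1 is the rank-1 GDAHA: concretely, when t = 1 the relations T_i - T_i^{-1} = t - t^{-1} force T_i^2 = 1, the T_i generate a copy of S_n, and the elements U_k^{(i)} = (T_{i-1}⋯T_1) U_k (T_1⋯T_{i-1})^{±1} generate commuting copies of H_1 permuted by S_n. -/
namespace Stmt16

/-- Generators of the GDAHA `H_n`: `U_1, …, U_m` and `T_1, …, T_{n-1}`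
(`T i` stands for `T_{i+1}`). -/
inductive GenH (n m : ℕ) : Type
  | U : Fin m → GenH n m
  | T : Fin (n - 1) → GenH n m

/-- Generators of `ℂ[S_n] ⋉ H_1^{⊗n}`: the `i`-th copy `V i k` of the generator
`U_k` of the rank-1 GDAHA `H_1`, and the Coxeter generators `s_1, …, s_{n-1}` of
`S_n`. -/
inductive GenS (n m : ℕ) : Type
  | V : Fin n → Fin m → GenS n m
  | s : Fin (n - 1) → GenS n m

section Aux

set_option linter.unusedSectionVars false

variable {M N : Type*} [Monoid M] [Monoid N]

theorem listSqOne (l : List M) (h : ∀ x ∈ l, x * x = 1) : l.prod * l.reverse.prod = 1 := by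
  induction l with
  | nil => simp
  | cons x t ih =>
    simp only [List.prod_cons, List.reverse_cons, List.prod_append, List.prod_cons,
      List.prod_nil, mul_one]
    have hx : x * x = 1 := h x (by simp)
    have ht : t.prod * t.reverse.prod = 1 := ih (fun y hy => h y (by simp [hy]))
    calc x * t.prod * (t.reverse.prod * x) = x * (t.prod * t.reverse.prod) * x := by
          simp only [mul_assoc]
      _ = 1 := by rw [ht, mul_one, hx]

theorem listSqOne' (l : List M) (h : ∀ x ∈ l, x * x = 1) : l.reverse.prod * l.prod = 1 := by
  have := listSqOne l.reverse (fun x hx => h x (by simpa using hx))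
  rwa [List.reverse_reverse] at this

theorem conjListProd (a b : M) (hab : a * b = 1) (hba : b * a = 1) (l : List M) :
    (l.map (fun x => a * x * b)).prod = a * l.prod * b := by
  induction l with
  | nil => simp [mul_assoc, hab]
  | cons x t ih =>
    simp only [List.map_cons, List.prod_cons, ih]
    calc a * x * b * (a * t.prod * b) = a * x * ((b * a) * (t.prod * b)) := by
          simp only [mul_assoc]
      _ = a * (x * t.prod) * b := by rw [hba, one_mul]; simp only [mul_assoc]

def ascP (t : ℕ → M) (p : ℕ) : M := (List.ofFn (fun j : Fin p => t j.val)).prod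

def descP (t : ℕ → M) (p : ℕ) : M := (List.ofFn (fun j : Fin p => t j.val)).reverse.prod

@[simp] lemma ascP_zero (t : ℕ → M) : ascP t 0 = 1 := by simp [ascP]

@[simp] lemma descP_zero (t : ℕ → M) : descP t 0 = 1 := by simp [descP]

lemma ofFn_succ_concat (t : ℕ → M) (p : ℕ) :
    (List.ofFn (fun j : Fin (p+1) => t j.val)) =
      (List.ofFn (fun j : Fin p => t j.val)) ++ [t p] := by
  rw [List.ofFn_succ']
  simp [List.concat_eq_append]

lemma ascP_succ (t : ℕ → M) (p : ℕ) : ascP t (p+1) = ascP t p * t p := by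
  rw [ascP, ofFn_succ_concat]; simp [ascP]

lemma descP_succ (t : ℕ → M) (p : ℕ) : descP t (p+1) = t p * descP t p := by
  rw [descP, ofFn_succ_concat]; simp [descP]

lemma map_ascP {F : Type*} [FunLike F M N] [MonoidHomClass F M N] (f : F) (t : ℕ → M) (p : ℕ) :
    f (ascP t p) = ascP (fun a => f (t a)) p := by
  rw [ascP, map_list_prod, List.map_ofFn, ascP]; rfl

lemma map_descP {F : Type*} [FunLike F M N] [MonoidHomClass F M N] (f : F) (t : ℕ → M) (p : ℕ) :
    f (descP t p) = descP (fun a => f (t a)) p := by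
  rw [descP, map_list_prod, List.map_reverse, List.map_ofFn, descP]; rfl

lemma ascP_descP (t : ℕ → M) (h : ∀ a, t a * t a = 1) (p : ℕ) : ascP t p * descP t p = 1 :=
  listSqOne _ (by intro x hx; simp only [List.mem_ofFn] at hx; obtain ⟨j, rfl⟩ := hx; exact h _)

lemma descP_ascP (t : ℕ → M) (h : ∀ a, t a * t a = 1) (p : ℕ) : descP t p * ascP t p = 1 :=
  listSqOne' _ (by intro x hx; simp only [List.mem_ofFn] at hx; obtain ⟨j, rfl⟩ := hx; exact h _)

theorem filter_finRange_eq_ofFn (N p : ℕ) (h : p ≤ N) :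
    (List.finRange N).filter (fun a : Fin N => decide ((a : ℕ) < p)) =
      List.ofFn (fun j : Fin p => (⟨j.val, lt_of_lt_of_le j.isLt h⟩ : Fin N)) := by
  induction N generalizing p with
  | zero =>
    interval_cases p
    simp [List.finRange]
  | succ N ih =>
    rcases p with _ | q
    · simp
    · rw [List.finRange_succ, List.filter_cons, List.filter_map]
      have hpred : ((fun b : Fin (N+1) => decide ((b : ℕ) < q+1)) ∘ Fin.succ)
          = fun a : Fin N => decide ((a : ℕ) < q) := by
        funext a; simp [Nat.succ_lt_succ_iff]
      rw [hpred, ih q (Nat.le_of_succ_le_succ h)]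
      rw [List.map_ofFn, List.ofFn_succ]
      simp only [Fin.val_zero, Nat.zero_lt_succ, decide_true, if_true]
      congr 1

lemma conj_comm_symm (s x y : M) (hs : s * s = 1)
    (h : x * (s * y * s) = (s * y * s) * x) : y * (s * x * s) = (s * x * s) * y := by
  have hs2 : ∀ w : M, s * (s * w) = w := fun w => by rw [← mul_assoc, hs, one_mul]
  have key := congrArg (fun z => s * z * s) h
  simp only [mul_assoc, hs2, hs, mul_one] at key
  simp only [mul_assoc]
  exact key.symm

end Aux

variable (n m : ℕ) (d : Fin m → ℕ) (u : (k : Fin m) → Fin (d k) → ℂ)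

noncomputable def UU (k : Fin m) : FreeAlgebra ℂ (GenH n m) :=
  FreeAlgebra.ι ℂ (GenH.U k)

noncomputable def TT (i : Fin (n - 1)) : FreeAlgebra ℂ (GenH n m) :=
  FreeAlgebra.ι ℂ (GenH.T i)

noncomputable def VV (i : Fin n) (k : Fin m) : FreeAlgebra ℂ (GenS n m) :=
  FreeAlgebra.ι ℂ (GenS.V i k)

noncomputable def ss (i : Fin (n - 1)) : FreeAlgebra ℂ (GenS n m) :=
  FreeAlgebra.ι ℂ (GenS.s i)

/-- The defining relations of the GDAHA `H_n` specialized at `t = 1` (where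
`T_i - T_i⁻¹ = t - t⁻¹ = 0` becomes `T_i² = 1`, and `T_1⁻¹ = T_1`):
`(U_1⋯U_m)(T_1⋯T_{n-2}T_{n-1}²T_{n-2}⋯T_1) = 1`, braid relations among the `T_i`,
`[T_i,T_j] = 0` for `|i-j| > 1`, `[U_j,T_i] = 0` for `i ≥ 2`,
`[U_j, T_1 U_j T_1] = 0`, `[U_k, T_1⁻¹ U_j T_1] = 0` for `k < j`, and
`∏_j (U_k - u_{kj}) = 0`. -/
inductive RelH : FreeAlgebra ℂ (GenH n m) → FreeAlgebra ℂ (GenH n m) → Prop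
  | main : RelH ((List.ofFn (UU n m)).prod *
      (((List.finRange (n - 1)).map (TT n m)).prod *
        (((List.finRange (n - 1)).map (TT n m)).reverse).prod)) 1
  | braid (i j : Fin (n - 1)) (h : (i : ℕ) + 1 = (j : ℕ)) :
      RelH (TT n m i * TT n m j * TT n m i) (TT n m j * TT n m i * TT n m j)
  | far (i j : Fin (n - 1)) (h : (i : ℕ) + 1 < (j : ℕ)) :
      RelH (TT n m i * TT n m j) (TT n m j * TT n m i)
  | UTcomm (k : Fin m) (i : Fin (n - 1)) (h : 1 ≤ (i : ℕ)) :
      RelH (UU n m k * TT n m i) (TT n m i * UU n m k)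
  | UT1U (k : Fin m) (h0 : 0 < n - 1) :
      RelH (UU n m k * (TT n m ⟨0, h0⟩ * UU n m k * TT n m ⟨0, h0⟩))
        ((TT n m ⟨0, h0⟩ * UU n m k * TT n m ⟨0, h0⟩) * UU n m k)
  | UT1U' (k j : Fin m) (hkj : (k : ℕ) < (j : ℕ)) (h0 : 0 < n - 1) :
      RelH (UU n m k * (TT n m ⟨0, h0⟩ * UU n m j * TT n m ⟨0, h0⟩))
        ((TT n m ⟨0, h0⟩ * UU n m j * TT n m ⟨0, h0⟩) * UU n m k)
  | poly (k : Fin m) :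
      RelH (((List.finRange (d k)).map
        (fun j => UU n m k - algebraMap ℂ (FreeAlgebra ℂ (GenH n m)) (u k j))).prod) 0
  | quad (i : Fin (n - 1)) : RelH (TT n m i * TT n m i) 1

/-- The defining relations of the semidirect product `ℂ[S_n] ⋉ H_1^{⊗n}`:
the Coxeter presentation of `S_n`, `n` commuting copies of the rank-1 GDAHA `H_1`
(generated by `V i 1, …, V i m` with `∏_j (V i k - u_{kj}) = 0` and
`V i 1 ⋯ V i m = 1`), permuted by `S_n`. -/
inductive RelS : FreeAlgebra ℂ (GenS n m) → FreeAlgebra ℂ (GenS n m) → Prop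
  | sq (i : Fin (n - 1)) : RelS (ss n m i * ss n m i) 1
  | braid (i j : Fin (n - 1)) (h : (i : ℕ) + 1 = (j : ℕ)) :
      RelS (ss n m i * ss n m j * ss n m i) (ss n m j * ss n m i * ss n m j)
  | far (i j : Fin (n - 1)) (h : (i : ℕ) + 1 < (j : ℕ)) :
      RelS (ss n m i * ss n m j) (ss n m j * ss n m i)
  | copyPoly (i : Fin n) (k : Fin m) :
      RelS (((List.finRange (d k)).map
        (fun j => VV n m i k - algebraMap ℂ (FreeAlgebra ℂ (GenS n m)) (u k j))).prod) 0
  | copyProd (i : Fin n) : RelS ((List.ofFn (fun k => VV n m i k)).prod) 1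
  | commute (i i' : Fin n) (k k' : Fin m) (h : i ≠ i') :
      RelS (VV n m i k * VV n m i' k') (VV n m i' k' * VV n m i k)
  | act (i : Fin n) (k : Fin m) (jj : Fin (n - 1)) :
      RelS (ss n m jj * VV n m i k)
        (VV n m (Equiv.swap (⟨(jj : ℕ), by have := jj.isLt; omega⟩ : Fin n)
            (⟨(jj : ℕ) + 1, by have := jj.isLt; omega⟩ : Fin n) i) k * ss n m jj)

/-- The ascending product `T_1 ⋯ T_{i-1}` (those `T_a` with `a < i`). -/
noncomputable def Tasc (i : Fin n) : List (FreeAlgebra ℂ (GenH n m)) :=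
  (((List.finRange (n - 1)).filter (fun a : Fin (n - 1) => decide ((a : ℕ) < (i : ℕ)))).map (TT n m))

-- ===== quotient-level generators =====

noncomputable def mkA : FreeAlgebra ℂ (GenH n m) →ₐ[ℂ] RingQuot (RelH n m d u) :=
  RingQuot.mkAlgHom ℂ (RelH n m d u)

noncomputable def mkB : FreeAlgebra ℂ (GenS n m) →ₐ[ℂ] RingQuot (RelS n m d u) :=
  RingQuot.mkAlgHom ℂ (RelS n m d u)

noncomputable def tq (a : Fin (n-1)) : RingQuot (RelH n m d u) := mkA n m d u (TT n m a)
noncomputable def uq (k : Fin m) : RingQuot (RelH n m d u) := mkA n m d u (UU n m k)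
noncomputable def sq (a : Fin (n-1)) : RingQuot (RelS n m d u) := mkB n m d u (ss n m a)
noncomputable def vq (i : Fin n) (k : Fin m) : RingQuot (RelS n m d u) := mkB n m d u (VV n m i k)

noncomputable def tN (a : ℕ) : RingQuot (RelH n m d u) :=
  if h : a < n - 1 then tq n m d u ⟨a, h⟩ else 1

noncomputable def sN (a : ℕ) : RingQuot (RelS n m d u) :=
  if h : a < n - 1 then sq n m d u ⟨a, h⟩ else 1

noncomputable def WH (p : ℕ) (k : Fin m) : RingQuot (RelH n m d u) :=
  descP (tN n m d u) p * uq n m d u k * ascP (tN n m d u) p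

lemma relA {x y : FreeAlgebra ℂ (GenH n m)} (h : RelH n m d u x y) :
    mkA n m d u x = mkA n m d u y := RingQuot.mkAlgHom_rel ℂ h

lemma relB {x y : FreeAlgebra ℂ (GenS n m)} (h : RelS n m d u x y) :
    mkB n m d u x = mkB n m d u y := RingQuot.mkAlgHom_rel ℂ h

-- ===== H-side basic relations =====

lemma tq_sq (a : Fin (n-1)) : tq n m d u a * tq n m d u a = 1 := by
  have := relA n m d u (RelH.quad a)
  simpa [tq, map_mul] using this

lemma tN_sq (a : ℕ) : tN n m d u a * tN n m d u a = 1 := by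
  unfold tN; split
  · exact tq_sq n m d u _
  · simp

lemma tN_braid (a : ℕ) (h : a + 1 < n - 1) :
    tN n m d u a * tN n m d u (a+1) * tN n m d u a
      = tN n m d u (a+1) * tN n m d u a * tN n m d u (a+1) := by
  have h' : a < n - 1 := by omega
  have := relA n m d u (RelH.braid ⟨a, h'⟩ ⟨a+1, h⟩ rfl)
  simp only [tN, dif_pos h, dif_pos h']
  simpa [tq, map_mul] using this

lemma tN_far (a b : ℕ) (h : a + 1 < b) : Commute (tN n m d u a) (tN n m d u b) := by
  unfold Commute SemiconjBy
  by_cases hb : b < n - 1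
  · have ha : a < n - 1 := by omega
    have := relA n m d u (RelH.far ⟨a, ha⟩ ⟨b, hb⟩ h)
    simp only [tN, dif_pos ha, dif_pos hb]
    simpa [tq, map_mul] using this
  · simp [tN, dif_neg hb]

lemma uq_tN (k : Fin m) (a : ℕ) (ha : 1 ≤ a) : Commute (uq n m d u k) (tN n m d u a) := by
  unfold Commute SemiconjBy
  by_cases h : a < n - 1
  · have := relA n m d u (RelH.UTcomm k ⟨a, h⟩ ha)
    simp only [tN, dif_pos h]
    simpa [tq, uq, map_mul] using this
  · simp [tN, dif_neg h]

lemma tN_zero (hn : 2 ≤ n) : tN n m d u 0 = tq n m d u ⟨0, by omega⟩ := by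
  simp only [tN, dif_pos (show 0 < n - 1 by omega)]

lemma uq_C (hn : 2 ≤ n) (k j : Fin m) :
    Commute (uq n m d u k) (tN n m d u 0 * uq n m d u j * tN n m d u 0) := by
  have h0 : 0 < n - 1 := by omega
  unfold Commute SemiconjBy
  rw [tN_zero n m d u hn]
  rcases lt_trichotomy (k : ℕ) (j : ℕ) with h | h | h
  · have := relA n m d u (RelH.UT1U' k j h h0)
    simpa [tq, uq, map_mul] using this
  · have hkj : k = j := Fin.ext h
    subst hkj
    have := relA n m d u (RelH.UT1U k h0)
    simpa [tq, uq, map_mul] using this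
  · have := relA n m d u (RelH.UT1U' j k h h0)
    have h2 : uq n m d u j * (tq n m d u ⟨0, by omega⟩ * uq n m d u k * tq n m d u ⟨0, by omega⟩)
        = (tq n m d u ⟨0, by omega⟩ * uq n m d u k * tq n m d u ⟨0, by omega⟩) * uq n m d u j := by
      simpa [tq, uq, map_mul] using this
    exact conj_comm_symm _ _ _ (tq_sq n m d u _) h2

lemma tq_map_sq : ∀ x ∈ (List.finRange (n-1)).map (tq n m d u), x * x = 1 := by
  intro x hx
  simp only [List.mem_map] at hx
  obtain ⟨a, -, rfl⟩ := hx
  exact tq_sq n m d u a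

lemma uq_prod : (List.ofFn (uq n m d u)).prod = 1 := by
  have h1 := relA n m d u (@RelH.main n m d u)
  rw [map_mul, map_mul, map_one, map_list_prod, map_list_prod, map_list_prod] at h1
  rw [List.map_ofFn, List.map_map, List.map_reverse, List.map_map] at h1
  have h2 : ((List.finRange (n-1)).map ((mkA n m d u) ∘ (TT n m))).prod *
      (((List.finRange (n-1)).map ((mkA n m d u) ∘ (TT n m))).reverse).prod = 1 := by
    apply listSqOne
    intro x hx
    simp only [List.mem_map, Function.comp] at hx
    obtain ⟨a, -, rfl⟩ := hx
    exact tq_sq n m d u a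
  rw [h2, mul_one] at h1
  exact h1

lemma polyH (k : Fin m) :
    ((List.finRange (d k)).map
      (fun j => uq n m d u k - algebraMap ℂ (RingQuot (RelH n m d u)) (u k j))).prod = 0 := by
  have h1 := relA n m d u (RelH.poly k)
  rw [map_zero, map_list_prod, List.map_map] at h1
  have hfun : (mkA n m d u) ∘ (fun j => UU n m k - algebraMap ℂ _ (u k j))
      = fun j => uq n m d u k - algebraMap ℂ (RingQuot (RelH n m d u)) (u k j) := by
    funext j
    simp [uq, map_sub, AlgHom.commutes]
  rwa [hfun] at h1

lemma W_zero (k : Fin m) : WH n m d u 0 k = uq n m d u k := by simp [WH]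

lemma W_succ (p : ℕ) (k : Fin m) :
    WH n m d u (p+1) k = tN n m d u p * WH n m d u p k * tN n m d u p := by
  rw [WH, WH, descP_succ, ascP_succ]
  simp only [mul_assoc]

lemma tN_comm_ascP (j p : ℕ) (h : p < j) : Commute (tN n m d u j) (ascP (tN n m d u) p) := by
  induction p with
  | zero => simpa using Commute.one_right _
  | succ p ih =>
    rw [ascP_succ]
    exact (ih (by omega)).mul_right ((tN_far n m d u p j (by omega)).symm)

lemma tN_comm_descP (j p : ℕ) (h : p < j) : Commute (tN n m d u j) (descP (tN n m d u) p) := by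
  induction p with
  | zero => simpa using Commute.one_right _
  | succ p ih =>
    rw [descP_succ]
    exact ((tN_far n m d u p j (by omega)).symm).mul_right (ih (by omega))

lemma tNj_descP (j p : ℕ) (h2 : j + 2 ≤ p) (hp : p ≤ n - 1) :
    tN n m d u j * descP (tN n m d u) p = descP (tN n m d u) p * tN n m d u (j+1) := by
  induction p, h2 using Nat.le_induction with
  | base =>
    set t := tN n m d u with ht
    rw [descP_succ, descP_succ]
    have hD : t (j+1) * descP t j = descP t j * t (j+1) :=
      (tN_comm_descP n m d u (j+1) j (by omega)).eq
    have hbr := tN_braid n m d u j (by omega)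
    rw [← ht] at hbr
    calc t j * (t (j+1) * (t j * descP t j))
        = (t j * t (j+1) * t j) * descP t j := by simp only [mul_assoc]
      _ = (t (j+1) * t j * t (j+1)) * descP t j := by rw [hbr]
      _ = t (j+1) * t j * (t (j+1) * descP t j) := by simp only [mul_assoc]
      _ = t (j+1) * t j * (descP t j * t (j+1)) := by rw [hD]
      _ = t (j+1) * (t j * descP t j) * t (j+1) := by simp only [mul_assoc]
  | succ p hjp ih =>
    set t := tN n m d u with ht
    rw [descP_succ]
    have hfar : t j * t p = t p * t j := (tN_far n m d u j p (by omega)).eq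
    calc t j * (t p * descP t p) = (t j * t p) * descP t p := by rw [mul_assoc]
      _ = t p * (t j * descP t p) := by rw [hfar, mul_assoc]
      _ = t p * (descP t p * t (j+1)) := by rw [ih (by omega)]
      _ = t p * descP t p * t (j+1) := by rw [mul_assoc]

lemma tNj1_ascP (j p : ℕ) (h2 : j + 2 ≤ p) (hp : p ≤ n - 1) :
    tN n m d u (j+1) * ascP (tN n m d u) p = ascP (tN n m d u) p * tN n m d u j := by
  induction p, h2 using Nat.le_induction with
  | base =>
    set t := tN n m d u with ht
    rw [ascP_succ, ascP_succ]
    have hA : t (j+1) * ascP t j = ascP t j * t (j+1) :=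
      (tN_comm_ascP n m d u (j+1) j (by omega)).eq
    have hbr := tN_braid n m d u j (by omega)
    rw [← ht] at hbr
    calc t (j+1) * (ascP t j * t j * t (j+1))
        = (t (j+1) * ascP t j) * (t j * t (j+1)) := by simp only [mul_assoc]
      _ = (ascP t j * t (j+1)) * (t j * t (j+1)) := by rw [hA]
      _ = ascP t j * (t (j+1) * t j * t (j+1)) := by simp only [mul_assoc]
      _ = ascP t j * (t j * t (j+1) * t j) := by rw [← hbr]
      _ = ascP t j * t j * t (j+1) * t j := by simp only [mul_assoc]
  | succ p hjp ih =>
    set t := tN n m d u with ht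
    rw [ascP_succ]
    have hfar : t j * t p = t p * t j := (tN_far n m d u j p (by omega)).eq
    calc t (j+1) * (ascP t p * t p) = (t (j+1) * ascP t p) * t p := by rw [mul_assoc]
      _ = ascP t p * (t j * t p) := by rw [ih (by omega), mul_assoc]
      _ = ascP t p * (t p * t j) := by rw [hfar]
      _ = ascP t p * t p * t j := by rw [mul_assoc]

def swapn (j p : ℕ) : ℕ := if p = j then j + 1 else if p = j + 1 then j else p

lemma act_T (j : ℕ) (hj : j < n - 1) (p : ℕ) (hp : p ≤ n - 1) (k : Fin m) :
    tN n m d u j * WH n m d u p k = WH n m d u (swapn j p) k * tN n m d u j := by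
  set t := tN n m d u with ht
  rcases eq_or_ne p j with rfl | hpj
  · rw [swapn, if_pos rfl, W_succ]
    calc t p * WH n m d u p k
        = t p * WH n m d u p k * 1 := by rw [mul_one]
      _ = t p * WH n m d u p k * (t p * t p) := by rw [tN_sq]
      _ = t p * WH n m d u p k * t p * t p := by simp only [mul_assoc]
  · rcases eq_or_ne p (j+1) with rfl | hpj1
    · rw [swapn, if_neg hpj, if_pos rfl, W_succ]
      calc t j * (t j * WH n m d u j k * t j)
          = (t j * t j) * (WH n m d u j k * t j) := by simp only [mul_assoc]
        _ = WH n m d u j k * t j := by rw [tN_sq]; rw [one_mul]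
    · rcases lt_or_gt_of_ne hpj with hlt | hgt
      · -- p < j : everything commutes
        rw [swapn, if_neg hpj, if_neg hpj1]
        have hc : Commute (t j) (WH n m d u p k) := by
          have h1 : Commute (t j) (descP (tN n m d u) p) := tN_comm_descP n m d u j p hlt
          have h2 : Commute (t j) (uq n m d u k) := (uq_tN n m d u k j (by omega)).symm
          have h3 : Commute (t j) (ascP (tN n m d u) p) := tN_comm_ascP n m d u j p hlt
          exact (h1.mul_right h2).mul_right h3
        exact hc.eq
      · -- p > j+1
        have h2 : j + 2 ≤ p := by omega
        rw [swapn, if_neg hpj, if_neg hpj1]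
        unfold WH
        have e1 := tNj_descP n m d u j p h2 hp
        have e2 := tNj1_ascP n m d u j p h2 hp
        have e3 : uq n m d u k * t (j+1) = t (j+1) * uq n m d u k :=
          (uq_tN n m d u k (j+1) (by omega)).eq
        calc t j * (descP (tN n m d u) p * uq n m d u k * ascP (tN n m d u) p)
            = (t j * descP (tN n m d u) p) * (uq n m d u k * ascP (tN n m d u) p) := by
              simp only [mul_assoc]
          _ = (descP (tN n m d u) p * t (j+1)) * (uq n m d u k * ascP (tN n m d u) p) := by
              rw [e1]
          _ = descP (tN n m d u) p * ((t (j+1) * uq n m d u k) * ascP (tN n m d u) p) := by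
              simp only [mul_assoc]
          _ = descP (tN n m d u) p * ((uq n m d u k * t (j+1)) * ascP (tN n m d u) p) := by
              rw [e3]
          _ = descP (tN n m d u) p * (uq n m d u k * (t (j+1) * ascP (tN n m d u) p)) := by
              simp only [mul_assoc]
          _ = descP (tN n m d u) p * (uq n m d u k * (ascP (tN n m d u) p * t j)) := by
              rw [e2]
          _ = descP (tN n m d u) p * uq n m d u k * ascP (tN n m d u) p * t j := by
              simp only [mul_assoc]

lemma u_comm_W (hn : 2 ≤ n) (k k' : Fin m) (p : ℕ) (h1 : 1 ≤ p) (hp : p ≤ n - 1) :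
    Commute (uq n m d u k) (WH n m d u p k') := by
  induction p, h1 using Nat.le_induction with
  | base =>
    have : WH n m d u 1 k' = tN n m d u 0 * uq n m d u k' * tN n m d u 0 := by
      rw [W_succ, W_zero]
    rw [this]
    exact uq_C n m d u hn k k'
  | succ p hp1 ih =>
    rw [W_succ]
    have hu : Commute (uq n m d u k) (tN n m d u p) := uq_tN n m d u k p hp1
    exact (hu.mul_right (ih (by omega))).mul_right hu

lemma W_comm (hn : 2 ≤ n) (p p' : ℕ) (k k' : Fin m) (hpp : p < p') (hp' : p' ≤ n - 1) :
    Commute (WH n m d u p k) (WH n m d u p' k') := by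
  induction p generalizing p' with
  | zero =>
    rw [W_zero]
    exact u_comm_W n m d u hn k k' p' (by omega) hp'
  | succ p ih =>
    have hact := act_T n m d u p (by omega) p' hp' k'
    have hsw : swapn p p' = p' := by
      rw [swapn, if_neg (by omega), if_neg (by omega)]
    rw [hsw] at hact
    have hc : Commute (tN n m d u p) (WH n m d u p' k') := hact
    rw [W_succ]
    exact (hc.mul_left (ih p' (by omega) hp')).mul_left hc

lemma swap_mk (N a b x : ℕ) (ha : a < N) (hb : b < N) (hx : x < N) :
    (Equiv.swap (⟨a, ha⟩ : Fin N) ⟨b, hb⟩) ⟨x, hx⟩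
      = ⟨if x = a then b else if x = b then a else x, by split_ifs <;> omega⟩ := by
  simp only [Equiv.swap_apply_def, Fin.ext_iff]
  split_ifs <;> simp_all <;> omega

lemma sq_sq (a : Fin (n-1)) : sq n m d u a * sq n m d u a = 1 := by
  have := relB n m d u (RelS.sq a)
  simpa [sq, map_mul] using this

lemma sN_sq (a : ℕ) : sN n m d u a * sN n m d u a = 1 := by
  unfold sN; split
  · exact sq_sq n m d u _
  · simp

lemma Sact (i : Fin n) (k : Fin m) (jj : Fin (n-1)) :
    sq n m d u jj * vq n m d u i k
      = vq n m d u (Equiv.swap (⟨(jj : ℕ), by have := jj.isLt; omega⟩ : Fin n)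
          (⟨(jj : ℕ) + 1, by have := jj.isLt; omega⟩ : Fin n) i) k * sq n m d u jj := by
  have := relB n m d u (RelS.act i k jj)
  simpa [sq, vq, map_mul] using this

lemma Sact_nat (j : ℕ) (hj : j < n - 1) (i : ℕ) (hi : i < n) (k : Fin m) :
    sq n m d u ⟨j, hj⟩ * vq n m d u ⟨i, hi⟩ k * sq n m d u ⟨j, hj⟩
      = vq n m d u ⟨swapn j i, by unfold swapn; split_ifs <;> omega⟩ k := by
  have h1 := Sact n m d u ⟨i, hi⟩ k ⟨j, hj⟩
  have hswap : (Equiv.swap (⟨((⟨j, hj⟩ : Fin (n-1)) : ℕ), by omega⟩ : Fin n)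
      (⟨((⟨j, hj⟩ : Fin (n-1)) : ℕ) + 1, by omega⟩ : Fin n) ⟨i, hi⟩ : Fin n)
      = ⟨swapn j i, by unfold swapn; split_ifs <;> omega⟩ := by
    rw [swap_mk]
    simp only [swapn, Fin.ext_iff]
  rw [hswap] at h1
  rw [h1, mul_assoc, sq_sq, mul_one]

lemma Scomm (i i' : Fin n) (k k' : Fin m) (h : i ≠ i') :
    Commute (vq n m d u i k) (vq n m d u i' k') := by
  unfold Commute SemiconjBy
  have := relB n m d u (RelS.commute i i' k k' h)
  simpa [vq, map_mul] using this

lemma ScopyProd (i : Fin n) : (List.ofFn (fun k => vq n m d u i k)).prod = 1 := by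
  have h1 := relB n m d u (RelS.copyProd i)
  rw [map_one, map_list_prod, List.map_ofFn] at h1
  exact h1

lemma ScopyPoly (i : Fin n) (k : Fin m) :
    ((List.finRange (d k)).map
      (fun j => vq n m d u i k - algebraMap ℂ (RingQuot (RelS n m d u)) (u k j))).prod = 0 := by
  have h1 := relB n m d u (RelS.copyPoly i k)
  rw [map_zero, map_list_prod, List.map_map] at h1
  have hfun : (mkB n m d u) ∘ (fun j => VV n m i k - algebraMap ℂ _ (u k j))
      = fun j => vq n m d u i k - algebraMap ℂ (RingQuot (RelS n m d u)) (u k j) := by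
    funext j
    simp [vq, map_sub, AlgHom.commutes]
  rwa [hfun] at h1

lemma conj_v (hn : 2 ≤ n) (p : ℕ) (hp : p < n) (k : Fin m) :
    descP (sN n m d u) p * vq n m d u ⟨0, by omega⟩ k * ascP (sN n m d u) p
      = vq n m d u ⟨p, hp⟩ k := by
  induction p with
  | zero => simp
  | succ p ih =>
    have hq : p < n - 1 := by omega
    rw [descP_succ, ascP_succ]
    have hsN : sN n m d u p = sq n m d u ⟨p, hq⟩ := by simp [sN, dif_pos hq]
    have ihp := ih (by omega)
    have hsw : swapn p p = p + 1 := by simp [swapn]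
    calc (sN n m d u p * descP (sN n m d u) p) * vq n m d u ⟨0, by omega⟩ k *
          (ascP (sN n m d u) p * sN n m d u p)
        = sN n m d u p * (descP (sN n m d u) p * vq n m d u ⟨0, by omega⟩ k *
            ascP (sN n m d u) p) * sN n m d u p := by simp only [mul_assoc]
      _ = sq n m d u ⟨p, hq⟩ * vq n m d u ⟨p, by omega⟩ k * sq n m d u ⟨p, hq⟩ := by
            rw [hsN, ihp]
      _ = vq n m d u ⟨swapn p p, by rw [hsw]; omega⟩ k := Sact_nat n m d u p hq p (by omega) k
      _ = vq n m d u ⟨p+1, hp⟩ k := by congr 1; exact Fin.ext hsw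

-- ===== the homomorphisms =====

noncomputable def fphi (hn : 2 ≤ n) : FreeAlgebra ℂ (GenH n m) →ₐ[ℂ] RingQuot (RelS n m d u) :=
  FreeAlgebra.lift ℂ (fun g => match g with
    | GenH.U k => vq n m d u ⟨0, by omega⟩ k
    | GenH.T a => sq n m d u a)

lemma fphi_U (hn : 2 ≤ n) (k : Fin m) :
    fphi n m d u hn (UU n m k) = vq n m d u ⟨0, by omega⟩ k := by
  simp [fphi, UU, FreeAlgebra.lift_ι_apply]

lemma fphi_T (hn : 2 ≤ n) (a : Fin (n-1)) :
    fphi n m d u hn (TT n m a) = sq n m d u a := by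
  simp [fphi, TT, FreeAlgebra.lift_ι_apply]

noncomputable def fpsi : FreeAlgebra ℂ (GenS n m) →ₐ[ℂ] RingQuot (RelH n m d u) :=
  FreeAlgebra.lift ℂ (fun g => match g with
    | GenS.V i k => WH n m d u i.val k
    | GenS.s a => tq n m d u a)

lemma fpsi_V (i : Fin n) (k : Fin m) :
    fpsi n m d u (VV n m i k) = WH n m d u i.val k := by
  simp [fpsi, VV, FreeAlgebra.lift_ι_apply]

lemma fpsi_s (a : Fin (n-1)) :
    fpsi n m d u (ss n m a) = tq n m d u a := by
  simp [fpsi, ss, FreeAlgebra.lift_ι_apply]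

lemma sq_braid (i j : Fin (n-1)) (h : (i : ℕ) + 1 = (j : ℕ)) :
    sq n m d u i * sq n m d u j * sq n m d u i = sq n m d u j * sq n m d u i * sq n m d u j := by
  simpa [sq, map_mul] using relB n m d u (RelS.braid i j h)

lemma sq_far (i j : Fin (n-1)) (h : (i : ℕ) + 1 < (j : ℕ)) :
    sq n m d u i * sq n m d u j = sq n m d u j * sq n m d u i := by
  simpa [sq, map_mul] using relB n m d u (RelS.far i j h)

lemma S_comm_v0 (hn : 2 ≤ n) (j : Fin (n-1)) (hj : 1 ≤ (j : ℕ)) (k : Fin m) :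
    vq n m d u ⟨0, by omega⟩ k * sq n m d u j = sq n m d u j * vq n m d u ⟨0, by omega⟩ k := by
  have E := Sact_nat n m d u (j : ℕ) j.isLt 0 (by omega) k
  rw [Fin.eta] at E
  have hsw : swapn (j : ℕ) 0 = 0 := by unfold swapn; rw [if_neg (by omega), if_neg (by omega)]
  have E2 : sq n m d u j * vq n m d u ⟨0, by omega⟩ k * sq n m d u j
      = vq n m d u ⟨0, by omega⟩ k := by
    rw [E]; congr 1; exact Fin.ext hsw
  have E3 := congrArg (fun z => z * sq n m d u j) E2
  simp only [mul_assoc, sq_sq, mul_one] at E3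
  exact E3.symm

lemma S_UT1U (hn : 2 ≤ n) (h0 : 0 < n - 1) (k k' : Fin m) :
    vq n m d u ⟨0, by omega⟩ k *
        (sq n m d u ⟨0, h0⟩ * vq n m d u ⟨0, by omega⟩ k' * sq n m d u ⟨0, h0⟩)
      = (sq n m d u ⟨0, h0⟩ * vq n m d u ⟨0, by omega⟩ k' * sq n m d u ⟨0, h0⟩) *
          vq n m d u ⟨0, by omega⟩ k := by
  have E := Sact_nat n m d u 0 h0 0 (by omega) k'
  rw [E]
  have h01 : (⟨0, by omega⟩ : Fin n) ≠ ⟨swapn 0 0, by unfold swapn; split_ifs <;> omega⟩ := by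
    simp [swapn, Fin.ext_iff]
  exact (Scomm n m d u _ _ k k' h01).eq

theorem fphi_rel (hn : 2 ≤ n) : ∀ ⦃x y⦄, RelH n m d u x y →
    fphi n m d u hn x = fphi n m d u hn y := by
  intro x y h
  induction h with
  | main =>
    rw [map_mul, map_mul, map_one, map_list_prod, map_list_prod, map_list_prod,
      List.map_ofFn, List.map_map, List.map_reverse, List.map_map]
    have hU : (⇑(fphi n m d u hn) ∘ UU n m) = fun k => vq n m d u ⟨0, by omega⟩ k :=
      funext (fphi_U n m d u hn)
    have hT : (⇑(fphi n m d u hn) ∘ TT n m) = sq n m d u := funext (fphi_T n m d u hn)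
    rw [hU, hT]
    have h2 : ((List.finRange (n-1)).map (sq n m d u)).prod *
        (((List.finRange (n-1)).map (sq n m d u)).reverse).prod = 1 := by
      apply listSqOne
      intro x hx
      simp only [List.mem_map] at hx
      obtain ⟨a, -, rfl⟩ := hx
      exact sq_sq n m d u a
    rw [h2, mul_one]
    exact ScopyProd n m d u ⟨0, by omega⟩
  | braid i j h =>
    simp only [map_mul, fphi_T]
    exact sq_braid n m d u i j h
  | far i j h =>
    simp only [map_mul, fphi_T]
    exact sq_far n m d u i j h
  | UTcomm k i h =>
    simp only [map_mul, fphi_T, fphi_U]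
    exact S_comm_v0 n m d u hn i h k
  | UT1U k h0 =>
    simp only [map_mul, fphi_T, fphi_U]
    exact S_UT1U n m d u hn h0 k k
  | UT1U' k j hkj h0 =>
    simp only [map_mul, fphi_T, fphi_U]
    exact S_UT1U n m d u hn h0 k j
  | poly k =>
    rw [map_zero, map_list_prod, List.map_map]
    have hfun : (⇑(fphi n m d u hn)) ∘ (fun j => UU n m k - algebraMap ℂ _ (u k j))
        = fun j => vq n m d u ⟨0, by omega⟩ k -
            algebraMap ℂ (RingQuot (RelS n m d u)) (u k j) := by
      funext j
      simp [map_sub, AlgHom.commutes, fphi_U]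
    rw [hfun]
    exact ScopyPoly n m d u ⟨0, by omega⟩ k
  | quad i =>
    simp only [map_mul, map_one, fphi_T]
    exact sq_sq n m d u i

lemma tq_braid (i j : Fin (n-1)) (h : (i : ℕ) + 1 = (j : ℕ)) :
    tq n m d u i * tq n m d u j * tq n m d u i = tq n m d u j * tq n m d u i * tq n m d u j := by
  simpa [tq, map_mul] using relA n m d u (RelH.braid i j h)

lemma tq_far (i j : Fin (n-1)) (h : (i : ℕ) + 1 < (j : ℕ)) :
    tq n m d u i * tq n m d u j = tq n m d u j * tq n m d u i := by
  simpa [tq, map_mul] using relA n m d u (RelH.far i j h)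

lemma tq_tN (a : Fin (n-1)) : tq n m d u a = tN n m d u (a : ℕ) := by
  rw [tN, dif_pos a.isLt]

lemma W_sub (p : ℕ) (k : Fin m) (c : ℂ) :
    WH n m d u p k - algebraMap ℂ (RingQuot (RelH n m d u)) c
      = descP (tN n m d u) p *
          (uq n m d u k - algebraMap ℂ (RingQuot (RelH n m d u)) c) * ascP (tN n m d u) p := by
  rw [WH, mul_sub, sub_mul]
  congr 1
  symm
  calc descP (tN n m d u) p * algebraMap ℂ (RingQuot (RelH n m d u)) c * ascP (tN n m d u) p
      = algebraMap ℂ (RingQuot (RelH n m d u)) c *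
          (descP (tN n m d u) p * ascP (tN n m d u) p) := by
        rw [← Algebra.commutes c (descP (tN n m d u) p), mul_assoc]
    _ = algebraMap ℂ (RingQuot (RelH n m d u)) c := by
        rw [descP_ascP _ (tN_sq n m d u), mul_one]

lemma W_poly (p : ℕ) (k : Fin m) :
    ((List.finRange (d k)).map
      (fun j => WH n m d u p k - algebraMap ℂ (RingQuot (RelH n m d u)) (u k j))).prod = 0 := by
  have h1 : (fun j => WH n m d u p k - algebraMap ℂ (RingQuot (RelH n m d u)) (u k j))
      = (fun x => descP (tN n m d u) p * x * ascP (tN n m d u) p) ∘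
          (fun j => uq n m d u k - algebraMap ℂ (RingQuot (RelH n m d u)) (u k j)) := by
    funext j
    exact W_sub n m d u p k (u k j)
  rw [h1, ← List.map_map, conjListProd _ _ (descP_ascP _ (tN_sq n m d u) p)
    (ascP_descP _ (tN_sq n m d u) p), polyH, mul_zero, zero_mul]

lemma W_prod (p : ℕ) : (List.ofFn (fun k => WH n m d u p k)).prod = 1 := by
  have h1 : (fun k => WH n m d u p k)
      = (fun x => descP (tN n m d u) p * x * ascP (tN n m d u) p) ∘ (uq n m d u) := rfl
  rw [h1, ← List.map_ofFn, conjListProd _ _ (descP_ascP _ (tN_sq n m d u) p)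
    (ascP_descP _ (tN_sq n m d u) p), uq_prod, mul_one, descP_ascP _ (tN_sq n m d u)]

theorem fpsi_rel (hn : 2 ≤ n) : ∀ ⦃x y⦄, RelS n m d u x y →
    fpsi n m d u x = fpsi n m d u y := by
  intro x y h
  induction h with
  | sq i =>
    simp only [map_mul, map_one, fpsi_s]
    exact tq_sq n m d u i
  | braid i j h =>
    simp only [map_mul, fpsi_s]
    exact tq_braid n m d u i j h
  | far i j h =>
    simp only [map_mul, fpsi_s]
    exact tq_far n m d u i j h
  | copyPoly i k =>
    rw [map_zero, map_list_prod, List.map_map]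
    have hfun : (⇑(fpsi n m d u)) ∘ (fun j => VV n m i k - algebraMap ℂ _ (u k j))
        = fun j => WH n m d u (i : ℕ) k - algebraMap ℂ (RingQuot (RelH n m d u)) (u k j) := by
      funext j
      simp [map_sub, AlgHom.commutes, fpsi_V]
    rw [hfun]
    exact W_poly n m d u (i : ℕ) k
  | copyProd i =>
    rw [map_one, map_list_prod, List.map_ofFn]
    have hfun : (⇑(fpsi n m d u)) ∘ (fun k => VV n m i k)
        = fun k => WH n m d u (i : ℕ) k := by
      funext k
      exact fpsi_V n m d u i k
    rw [hfun]
    exact W_prod n m d u (i : ℕ)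
  | commute i i' k k' h =>
    simp only [map_mul, fpsi_V]
    have hval : (i : ℕ) ≠ (i' : ℕ) := fun hc => h (Fin.ext hc)
    have hb : (i : ℕ) ≤ n - 1 := by have := i.isLt; omega
    have hb' : (i' : ℕ) ≤ n - 1 := by have := i'.isLt; omega
    rcases lt_or_gt_of_ne hval with hlt | hgt
    · exact (W_comm n m d u hn _ _ k k' hlt hb').eq
    · exact ((W_comm n m d u hn _ _ k' k hgt hb).symm).eq
  | act i k jj =>
    simp only [map_mul, fpsi_V, fpsi_s]
    have hval : ((Equiv.swap (⟨(jj : ℕ), by have := jj.isLt; omega⟩ : Fin n)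
        (⟨(jj : ℕ) + 1, by have := jj.isLt; omega⟩ : Fin n) i : Fin n) : ℕ)
        = swapn (jj : ℕ) (i : ℕ) := by
      have hswap := swap_mk n (jj : ℕ) ((jj : ℕ) + 1) (i : ℕ)
        (by have := jj.isLt; omega) (by have := jj.isLt; omega) i.isLt
      rw [Fin.eta] at hswap
      rw [hswap]
      simp [swapn]
    rw [tq_tN]
    have := act_T n m d u (jj : ℕ) jj.isLt (i : ℕ) (by have := i.isLt; omega) k
    rw [hval]
    exact this

-- ===== the isomorphism =====

noncomputable def phiA (hn : 2 ≤ n) :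
    RingQuot (RelH n m d u) →ₐ[ℂ] RingQuot (RelS n m d u) :=
  RingQuot.liftAlgHom ℂ ⟨fphi n m d u hn, fphi_rel n m d u hn⟩

noncomputable def psiA (hn : 2 ≤ n) :
    RingQuot (RelS n m d u) →ₐ[ℂ] RingQuot (RelH n m d u) :=
  RingQuot.liftAlgHom ℂ ⟨fpsi n m d u, fpsi_rel n m d u hn⟩

lemma phiA_mk (hn : 2 ≤ n) (x : FreeAlgebra ℂ (GenH n m)) :
    phiA n m d u hn (mkA n m d u x) = fphi n m d u hn x :=
  RingQuot.liftAlgHom_mkAlgHom_apply ℂ _ _ _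

lemma psiA_mk (hn : 2 ≤ n) (x : FreeAlgebra ℂ (GenS n m)) :
    psiA n m d u hn (mkB n m d u x) = fpsi n m d u x :=
  RingQuot.liftAlgHom_mkAlgHom_apply ℂ _ _ _

lemma phiA_tN (hn : 2 ≤ n) (a : ℕ) :
    phiA n m d u hn (tN n m d u a) = sN n m d u a := by
  unfold tN sN
  split
  · rw [tq, phiA_mk, fphi_T, sq]
  · rw [map_one]

lemma phi_W (hn : 2 ≤ n) (p : ℕ) (hp : p < n) (k : Fin m) :
    phiA n m d u hn (WH n m d u p k) = vq n m d u ⟨p, hp⟩ k := by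
  unfold WH
  rw [map_mul, map_mul, map_descP, map_ascP]
  have h1 : (fun a => phiA n m d u hn (tN n m d u a)) = sN n m d u :=
    funext (phiA_tN n m d u hn)
  rw [h1]
  rw [uq, phiA_mk, fphi_U]
  exact conj_v n m d u hn p hp k

lemma comp_phi_psi (hn : 2 ≤ n) :
    (phiA n m d u hn).comp (psiA n m d u hn) = AlgHom.id ℂ (RingQuot (RelS n m d u)) := by
  apply RingQuot.ringQuot_ext'
  apply FreeAlgebra.hom_ext
  funext g
  cases g with
  | V i k =>
    show (phiA n m d u hn).comp (psiA n m d u hn) (mkB n m d u (VV n m i k))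
        = mkB n m d u (VV n m i k)
    rw [AlgHom.comp_apply, psiA_mk, fpsi_V, phi_W n m d u hn (i : ℕ) i.isLt k, vq, Fin.eta]
  | s a =>
    show (phiA n m d u hn).comp (psiA n m d u hn) (mkB n m d u (ss n m a))
        = mkB n m d u (ss n m a)
    rw [AlgHom.comp_apply, psiA_mk, fpsi_s, tq, phiA_mk, fphi_T, sq]

lemma comp_psi_phi (hn : 2 ≤ n) :
    (psiA n m d u hn).comp (phiA n m d u hn) = AlgHom.id ℂ (RingQuot (RelH n m d u)) := by
  apply RingQuot.ringQuot_ext'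
  apply FreeAlgebra.hom_ext
  funext g
  cases g with
  | U k =>
    show (psiA n m d u hn).comp (phiA n m d u hn) (mkA n m d u (UU n m k))
        = mkA n m d u (UU n m k)
    rw [AlgHom.comp_apply, phiA_mk, fphi_U, vq, psiA_mk, fpsi_V]
    simp [WH, uq]
  | T a =>
    show (psiA n m d u hn).comp (phiA n m d u hn) (mkA n m d u (TT n m a))
        = mkA n m d u (TT n m a)
    rw [AlgHom.comp_apply, phiA_mk, fphi_T, sq, psiA_mk, fpsi_s, tq]

noncomputable def theIso (hn : 2 ≤ n) :
    RingQuot (RelH n m d u) ≃ₐ[ℂ] RingQuot (RelS n m d u) :=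
  AlgEquiv.ofAlgHom (phiA n m d u hn) (psiA n m d u hn)
    (comp_phi_psi n m d u hn) (comp_psi_phi n m d u hn)

lemma Tasc_eq (i : Fin n) :
    Tasc n m i = List.ofFn (fun j : Fin (i : ℕ) =>
      TT n m ⟨(j : ℕ), by have h1 := j.isLt; have h2 := i.isLt; omega⟩) := by
  unfold Tasc
  rw [filter_finRange_eq_ofFn (n-1) (i : ℕ) (by have := i.isLt; omega), List.map_ofFn]
  rfl

lemma mkA_Tasc_fun (i : Fin n) :
    (⇑(mkA n m d u) ∘ fun j : Fin (i : ℕ) =>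
        TT n m ⟨(j : ℕ), by have h1 := j.isLt; have h2 := i.isLt; omega⟩)
      = fun j : Fin (i : ℕ) => tN n m d u (j : ℕ) := by
  funext j
  show mkA n m d u (TT n m ⟨(j : ℕ), _⟩) = tN n m d u (j : ℕ)
  rw [tN, dif_pos (show (j : ℕ) < n - 1 by have h1 := j.isLt; have h2 := i.isLt; omega), tq]

lemma mkA_Tasc_asc (i : Fin n) :
    mkA n m d u ((Tasc n m i).prod) = ascP (tN n m d u) (i : ℕ) := by
  rw [Tasc_eq, map_list_prod, List.map_ofFn, mkA_Tasc_fun, ascP]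

lemma mkA_Tasc_desc (i : Fin n) :
    mkA n m d u ((Tasc n m i).reverse.prod) = descP (tN n m d u) (i : ℕ) := by
  rw [Tasc_eq, map_list_prod, List.map_reverse, List.map_ofFn, mkA_Tasc_fun, descP]

lemma theIso_apply (hn : 2 ≤ n) (x : RingQuot (RelH n m d u)) :
    theIso n m d u hn x = phiA n m d u hn x := rfl

/-- The specialization of the GDAHA `H_n` at `t = 1` is isomorphic to the semidirect
product `ℂ[S_n] ⋉ H_1^{⊗n}`: there is an algebra isomorphism sending each `T_i` to the
transposition `s_i` and each element `U_k^{(i)} = (T_{i-1}⋯T_1) U_k (T_1⋯T_{i-1})`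
to the generator `U_k` of the `i`-th tensor factor `H_1`; these elements generate
commuting copies of `H_1` permuted by `S_n`. -/
theorem stmt_16 (hn : 2 ≤ n) (hd : ∀ k, 0 < d k) (hu : ∀ k j, u k j ≠ 0) :
    ∃ φ : RingQuot (RelH n m d u) ≃ₐ[ℂ] RingQuot (RelS n m d u),
      (∀ i : Fin (n - 1),
        φ (RingQuot.mkAlgHom ℂ (RelH n m d u) (TT n m i)) =
          RingQuot.mkAlgHom ℂ (RelS n m d u) (ss n m i)) ∧
      (∀ (i : Fin n) (k : Fin m),
        φ (RingQuot.mkAlgHom ℂ (RelH n m d u)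
            ((Tasc n m i).reverse.prod * UU n m k * (Tasc n m i).prod)) =
          RingQuot.mkAlgHom ℂ (RelS n m d u) (VV n m i k)) := by
  refine ⟨theIso n m d u hn, ?_, ?_⟩
  · intro i
    show theIso n m d u hn (mkA n m d u (TT n m i)) = mkB n m d u (ss n m i)
    rw [theIso_apply, phiA_mk, fphi_T, sq]
  · intro i k
    show theIso n m d u hn (mkA n m d u ((Tasc n m i).reverse.prod * UU n m k * (Tasc n m i).prod))
        = mkB n m d u (VV n m i k)
    have hW : mkA n m d u ((Tasc n m i).reverse.prod * UU n m k * (Tasc n m i).prod)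
        = WH n m d u (i : ℕ) k := by
      unfold WH
      rw [map_mul, map_mul, mkA_Tasc_desc, mkA_Tasc_asc, uq]
    rw [hW, theIso_apply, phi_W n m d u hn (i : ℕ) i.isLt k, vq, Fin.eta]

end Stmt16
end

section
/- In the cyclotomic Hecke algebra H_{n,ℓ}(v,t), the element X = T_{n-1}⋯T_1 U T_1 ⋯ T_{n-1} commutes with the subalgebra H_{n-1,ℓ} generated by U, T_1, ..., T_{n-2}. -/
/-- The element `X = T_{n-1} ⋯ T_1 U T_1 ⋯ T_{n-1}` of the cyclotomic Hecke algebra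
(`T i` stands for `T_{i+1}`). -/
def Xelt (n : ℕ) {A : Type*} [Ring A] (T : Fin (n - 1) → A) (U : A) : A :=
  ((List.finRange (n - 1)).reverse.map T).prod * U * ((List.finRange (n - 1)).map T).prod

section AK

variable {A : Type*} [Ring A] (T' : ℕ → A) (U : A)

/-- Right partial product `T'_0 ⋯ T'_{k-1}`. -/
def Rk (k : ℕ) : A := ((List.range k).map T').prod

/-- Left partial product `T'_{k-1} ⋯ T'_0`. -/
def Lk (k : ℕ) : A := (((List.range k).map T').reverse).prod

/-- The truncated element `X_k = T'_{k-1} ⋯ T'_0 U T'_0 ⋯ T'_{k-1}`. -/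
def Xk (k : ℕ) : A := Lk T' k * U * Rk T' k

lemma Rk_succ (k : ℕ) : Rk T' (k + 1) = Rk T' k * T' k := by
  simp [Rk, List.range_succ]

lemma Lk_succ (k : ℕ) : Lk T' (k + 1) = T' k * Lk T' k := by
  simp [Lk, List.range_succ]

lemma Xk_zero : Xk T' U 0 = U := by simp [Xk, Lk, Rk]

lemma Xk_succ (k : ℕ) : Xk T' U (k + 1) = T' k * Xk T' U k * T' k := by
  simp [Xk, Lk_succ, Rk_succ, mul_assoc]

/-- `X_k` commutes with `T'_j` for `j > k`. -/
lemma lemA (hF : ∀ i j, i + 1 < j → T' i * T' j = T' j * T' i)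
    (hU : ∀ j, 1 ≤ j → U * T' j = T' j * U) :
    ∀ k j, k < j → Commute (Xk T' U k) (T' j) := by
  intro k
  induction k with
  | zero =>
    intro j hj
    rw [Xk_zero]
    exact hU j hj
  | succ k ih =>
    intro j hj
    have cT : Commute (T' k) (T' j) := hF k j hj
    have cX : Commute (Xk T' U k) (T' j) := ih j (Nat.lt_of_succ_lt hj)
    rw [Xk_succ]
    exact (cT.mul_left cX).mul_left cT

/-- `X_k` commutes with `U`. -/
lemma lemB (hU : ∀ j, 1 ≤ j → U * T' j = T' j * U)
    (hU1 : U * T' 0 * U * T' 0 = T' 0 * U * T' 0 * U) :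
    ∀ k, Commute (Xk T' U k) U := by
  intro k
  induction k with
  | zero => rw [Xk_zero]
  | succ k ih =>
    rw [Xk_succ]
    match k, ih with
    | 0, _ =>
      rw [Xk_zero]
      show (T' 0 * U * T' 0) * U = U * (T' 0 * U * T' 0)
      simp only [mul_assoc] at hU1 ⊢
      exact hU1.symm
    | (j + 1), ih =>
      have cT : Commute (T' (j + 1)) U := (hU (j + 1) (Nat.le_add_left 1 j)).symm
      exact (cT.mul_left ih).mul_left cT

/-- `X_k` commutes with `T'_i` for `i + 2 ≤ k ≤ m`. -/
lemma lemC (m : ℕ)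
    (hB : ∀ i, i + 2 ≤ m → T' i * T' (i + 1) * T' i = T' (i + 1) * T' i * T' (i + 1))
    (hF : ∀ i j, i + 1 < j → T' i * T' j = T' j * T' i)
    (hU : ∀ j, 1 ≤ j → U * T' j = T' j * U) :
    ∀ k, k ≤ m → ∀ i, i + 2 ≤ k → Commute (Xk T' U k) (T' i) := by
  intro k
  induction k with
  | zero => intro _ i hi; omega
  | succ k ih =>
    intro hk i hi
    rcases Nat.lt_or_ge (i + 2) (k + 1) with h | h
    · -- inductive case: i + 2 ≤ k
      have cT : Commute (T' k) (T' i) := (hF i k (by omega)).symm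
      have cX : Commute (Xk T' U k) (T' i) := ih (by omega) i (by omega)
      rw [Xk_succ]
      exact (cT.mul_left cX).mul_left cT
    · -- base case: k = i + 1
      have hk' : k = i + 1 := by omega
      subst hk'
      have hb := hB i (by omega)
      have hA : (Xk T' U i) * T' (i + 1) = T' (i + 1) * (Xk T' U i) :=
        (lemA T' U hF hU i (i + 1) (Nat.lt_succ_self i)).eq
      rw [Xk_succ, Xk_succ]
      set a := T' i with ha
      set b := T' (i + 1) with hbdef
      set X := Xk T' U i with hXdef
      show (b * (a * X * a) * b) * a = a * (b * (a * X * a) * b)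
      calc (b * (a * X * a) * b) * a
          = b * a * X * (a * b * a) := by simp only [mul_assoc]
        _ = b * a * X * (b * a * b) := by rw [hb]
        _ = b * a * (X * b) * (a * b) := by simp only [mul_assoc]
        _ = b * a * (b * X) * (a * b) := by rw [hA]
        _ = (b * a * b) * (X * (a * b)) := by simp only [mul_assoc]
        _ = (a * b * a) * (X * (a * b)) := by rw [← hb]
        _ = a * (b * (a * X * a) * b) := by simp only [mul_assoc]

end AK

/-- In the Ariki–Koike cyclotomic Hecke algebra `H_{n,ℓ}(v,t)`, the element
`X = T_{n-1} ⋯ T_1 U T_1 ⋯ T_{n-1}` commutes with the subalgebra `H_{n-1,ℓ}`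
generated by `U, T_1, …, T_{n-2}`: `[X,U] = 0` and `[X,T_i] = 0` for `i ≤ n-2`. -/
theorem stmt_19 (n ℓ : ℕ) (hn : 2 ≤ n) (hℓ : 0 < ℓ)
    {A : Type*} [Ring A] [Algebra ℂ A]
    (v : Fin ℓ → ℂ) (t : ℂ)
    (T Tinv : Fin (n - 1) → A) (U : A)
    (hTinv : ∀ i, T i * Tinv i = 1 ∧ Tinv i * T i = 1)
    (hbraid : ∀ i j : Fin (n - 1), (i : ℕ) + 1 = (j : ℕ) →
      T i * T j * T i = T j * T i * T j)
    (hfar : ∀ i j : Fin (n - 1), (i : ℕ) + 1 < (j : ℕ) → T i * T j = T j * T i)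
    (hUT : ∀ j : Fin (n - 1), 1 ≤ (j : ℕ) → U * T j = T j * U)
    (hUT1 : ∀ h0 : 0 < n - 1,
      U * T ⟨0, h0⟩ * U * T ⟨0, h0⟩ = T ⟨0, h0⟩ * U * T ⟨0, h0⟩ * U)
    (hcyc : ((List.finRange ℓ).map (fun j => U - algebraMap ℂ A (v j))).prod = 0)
    (hquad : ∀ i, T i - Tinv i = algebraMap ℂ A (t - t⁻¹)) :
    Xelt n T U * U = U * Xelt n T U ∧
    ∀ i : Fin (n - 1), (i : ℕ) + 1 < n - 1 →
      Xelt n T U * T i = T i * Xelt n T U := by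
  have h0 : 0 < n - 1 := by omega
  -- extend `T` to a function on `ℕ`
  set T' : ℕ → A := fun j => if h : j < n - 1 then T ⟨j, h⟩ else 1 with hT'def
  have hT'lt : ∀ (j : ℕ) (h : j < n - 1), T' j = T ⟨j, h⟩ := fun j h => dif_pos h
  have hT'ge : ∀ j : ℕ, n - 1 ≤ j → T' j = 1 := fun j h => dif_neg (by omega)
  have hTeq : ∀ i : Fin (n - 1), T i = T' i.val := fun i => by rw [hT'lt i.val i.isLt]
  -- translated relations
  have hF' : ∀ i j, i + 1 < j → T' i * T' j = T' j * T' i := by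
    intro i j hij
    by_cases hj : j < n - 1
    · have hi : i < n - 1 := by omega
      rw [hT'lt i hi, hT'lt j hj]
      exact hfar ⟨i, hi⟩ ⟨j, hj⟩ hij
    · rw [hT'ge j (by omega), mul_one, one_mul]
  have hU' : ∀ j, 1 ≤ j → U * T' j = T' j * U := by
    intro j hj
    by_cases h : j < n - 1
    · rw [hT'lt j h]; exact hUT ⟨j, h⟩ hj
    · rw [hT'ge j (by omega), mul_one, one_mul]
  have hB' : ∀ i, i + 2 ≤ n - 1 →
      T' i * T' (i + 1) * T' i = T' (i + 1) * T' i * T' (i + 1) := by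
    intro i hi
    have h1 : i < n - 1 := by omega
    have h2 : i + 1 < n - 1 := by omega
    rw [hT'lt i h1, hT'lt (i + 1) h2]
    exact hbraid ⟨i, h1⟩ ⟨i + 1, h2⟩ rfl
  have hU1' : U * T' 0 * U * T' 0 = T' 0 * U * T' 0 * U := by
    rw [hT'lt 0 h0]; exact hUT1 h0
  -- identify `Xelt` with `Xk`
  have hmap : (List.finRange (n - 1)).map T = (List.range (n - 1)).map T' := by
    rw [← (List.ext_getElem (by simp) (by simp) : (List.finRange (n - 1)).map (fun i : Fin (n - 1) => (i : ℕ)) = List.range (n - 1)), List.map_map]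
    exact List.map_congr_left fun i _ => hTeq i
  have hX : Xelt n T U = Xk T' U (n - 1) := by
    unfold Xelt Xk Lk Rk
    rw [List.map_reverse, hmap]
  constructor
  · rw [hX]
    exact (lemB T' U hU' hU1' (n - 1)).eq
  · intro i hi
    rw [hX, hTeq i]
    exact (lemC T' U (n - 1) hB' hF' hU' (n - 1) le_rfl i.val (by omega)).eq
end
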